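/- arXiv:2307.03820 — 9 statements merged into one kernel-verified Lean document; each statement's English description precedes it below -/
import Mathlib

section
/- Suppose f is C² on a neighbourhood of x(t₀), x is twice differentiable at t₀ ∈ (0,1), the natural pathway equation f(x(t)) = (1−t) • f(x(0)) holds for all t ∈ [0,1], and J := f′(x(t₀)) is a continuous linear isomorphism from E onto F. Then the second derivative of the pathway satisfies x″(t₀) = −J⁻¹( f″(x(t₀))[x′(t₀), x′(t₀)] ). -/
/-!
Along the pathway `f ∘ x` is affine with slope `-f (x 0)`, so by the chain rule
`f'(x s) (x' s) = -f (x 0)` for all `s` near `t₀`. Differentiating this identity once more at `t₀`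
gives `f''(x t₀)[x' t₀, x' t₀] + J (x'' t₀) = 0`, and applying `J⁻¹` solves for `x'' t₀`.
-/

open Topology

section SecondOrderChainRule

variable {𝕜 E F : Type*} [NontriviallyNormedField 𝕜]
  [NormedAddCommGroup E] [NormedSpace 𝕜 E] [NormedAddCommGroup F] [NormedSpace 𝕜 F]
  {f : E → F} {x : 𝕜 → E} {t : 𝕜}

theorem hasDerivAt_fderiv_apply_deriv (hf : DifferentiableAt 𝕜 (fderiv 𝕜 f) (x t))
    (hx : DifferentiableAt 𝕜 x t) (hx' : DifferentiableAt 𝕜 (deriv x) t) :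
    HasDerivAt (fun s => fderiv 𝕜 f (x s) (deriv x s))
      (iteratedFDeriv 𝕜 2 f (x t) ![deriv x t, deriv x t]
        + fderiv 𝕜 f (x t) (iteratedDeriv 2 x t)) t := by
  rw [iteratedFDeriv_two_apply, iteratedDeriv_succ, iteratedDeriv_one]
  exact (hf.hasFDerivAt.comp_hasDerivAt t hx.hasDerivAt).clm_apply hx'.hasDerivAt

theorem iteratedFDeriv_two_apply_add_fderiv_iteratedDeriv_eq_zero {v : F}
    (hf : ContDiffAt 𝕜 2 f (x t)) (hx : ∀ᶠ s in 𝓝 t, DifferentiableAt 𝕜 x s)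
    (hx' : DifferentiableAt 𝕜 (deriv x) t)
    (hv : ∀ᶠ s in 𝓝 t, HasDerivAt (fun s => f (x s)) v s) :
    iteratedFDeriv 𝕜 2 f (x t) ![deriv x t, deriv x t]
      + fderiv 𝕜 f (x t) (iteratedDeriv 2 x t) = 0 := by
  have hf_near : ∀ᶠ s in 𝓝 t, DifferentiableAt 𝕜 f (x s) :=
    hx.self_of_nhds.continuousAt.eventually
      (hf.eventually (by simp) |>.mono fun _ h => h.differentiableAt (by simp))
  have hconst : (fun s => fderiv 𝕜 f (x s) (deriv x s)) =ᶠ[𝓝 t] fun _ => v := by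
    filter_upwards [hv, hf_near, hx] with s hvs hfs hxs
    exact (hfs.hasFDerivAt.comp_hasDerivAt s hxs.hasDerivAt).unique hvs
  have hf' : DifferentiableAt 𝕜 (fderiv 𝕜 f) (x t) :=
    (hf.fderiv_right (m := 1) (by norm_num)).differentiableAt (by norm_num)
  exact (hasDerivAt_fderiv_apply_deriv hf' hx.self_of_nhds hx').unique
    ((hasDerivAt_const t v).congr_of_eventuallyEq hconst)

end SecondOrderChainRule

theorem hasDerivAt_one_sub_smul_const {𝕜 F : Type*} [NontriviallyNormedField 𝕜]
    [NormedAddCommGroup F] [NormedSpace 𝕜 F] (c : F) (t : 𝕜) :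
    HasDerivAt (fun s : 𝕜 => (1 - s) • c) (-c) t := by
  simpa using ((hasDerivAt_id t).const_sub 1).smul_const c

theorem natural_pathway_second_deriv_general
    {E F : Type*} [NormedAddCommGroup E] [NormedSpace ℝ E]
    [NormedAddCommGroup F] [NormedSpace ℝ F]
    (f : E → F) (x : ℝ → E) (t₀ : ℝ) (ht₀ : t₀ ∈ Set.Ioo (0 : ℝ) 1)
    (hf : ContDiffAt ℝ 2 f (x t₀))
    (hx1 : ∀ᶠ s in 𝓝 t₀, DifferentiableAt ℝ x s)
    (hx2 : DifferentiableAt ℝ (deriv x) t₀)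
    (hpath : ∀ t ∈ Set.Icc (0 : ℝ) 1, f (x t) = (1 - t) • f (x 0))
    (J : E ≃L[ℝ] F) (hJ : (J : E →L[ℝ] F) = fderiv ℝ f (x t₀)) :
    iteratedDeriv 2 x t₀ =
      -J.symm (iteratedFDeriv ℝ 2 f (x t₀) ![deriv x t₀, deriv x t₀]) := by
  have hv : ∀ᶠ s in 𝓝 t₀, HasDerivAt (fun s => f (x s)) (-f (x 0)) s := by
    filter_upwards [isOpen_Ioo.mem_nhds ht₀] with s hs
    refine (hasDerivAt_one_sub_smul_const _ s).congr_of_eventuallyEq ?_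
    filter_upwards [isOpen_Ioo.mem_nhds hs] with r hr
    exact hpath r (Set.Ioo_subset_Icc_self hr)
  have hsum := iteratedFDeriv_two_apply_add_fderiv_iteratedDeriv_eq_zero hf hx1 hx2 hv
  rw [← hJ] at hsum
  rw [← map_neg, ContinuousLinearEquiv.eq_symm_apply]
  exact eq_neg_of_add_eq_zero_right hsum

/-- Second-order pathway derivative (geodesic acceleration):
`x″(t₀) = -J⁻¹ (f″(x t₀)[x′ t₀, x′ t₀])` along the natural pathway. -/
theorem natural_pathway_second_deriv
    {E F : Type*} [NormedAddCommGroup E] [NormedSpace ℝ E] [CompleteSpace E]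
    [NormedAddCommGroup F] [NormedSpace ℝ F] [CompleteSpace F]
    (f : E → F) (x : ℝ → E) (t₀ : ℝ) (ht₀ : t₀ ∈ Set.Ioo (0 : ℝ) 1)
    (hf : ContDiffAt ℝ 2 f (x t₀))
    (hx1 : ∀ᶠ s in 𝓝 t₀, DifferentiableAt ℝ x s)
    (hx2 : DifferentiableAt ℝ (deriv x) t₀)
    (hpath : ∀ t ∈ Set.Icc (0 : ℝ) 1, f (x t) = (1 - t) • f (x 0))
    (J : E ≃L[ℝ] F) (hJ : (J : E →L[ℝ] F) = fderiv ℝ f (x t₀)) :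
    iteratedDeriv 2 x t₀ =
      -J.symm (iteratedFDeriv ℝ 2 f (x t₀) ![deriv x t₀, deriv x t₀]) :=
  natural_pathway_second_deriv_general f x t₀ ht₀ hf hx1 hx2 hpath J hJ
end

section
/- Suppose f is C³ on a neighbourhood of x(t₀), x is three times differentiable at t₀ ∈ (0,1), the natural pathway equation f(x(t)) = (1−t) • f(x(0)) holds for all t ∈ [0,1], and J := f′(x(t₀)) is a continuous linear isomorphism from E onto F. Then the third derivative of the pathway satisfies x⁽³⁾(t₀) = −J⁻¹( f⁽³⁾(x(t₀))[x′(t₀), x′(t₀), x′(t₀)] + 3 • f″(x(t₀))[x′(t₀), x″(t₀)] ). -/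
open Topology

lemma iteratedFDeriv_three_apply' {E F : Type*} [NormedAddCommGroup E] [NormedSpace ℝ E]
    [NormedAddCommGroup F] [NormedSpace ℝ F] (f : E → F) (z : E) (m : Fin 3 → E) :
    iteratedFDeriv ℝ 3 f z m = fderiv ℝ (fderiv ℝ (fderiv ℝ f)) z (m 0) (m 1) (m 2) := by
  rw [iteratedFDeriv_succ_apply_right, iteratedFDeriv_two_apply]
  rfl

/-- Third-order pathway derivative:
`x⁽³⁾(t₀) = -J⁻¹ (f⁽³⁾(x t₀)[x′,x′,x′] + 3 • f″(x t₀)[x′,x″])` along the natural pathway. -/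
theorem natural_pathway_third_deriv
    {E F : Type*} [NormedAddCommGroup E] [NormedSpace ℝ E] [CompleteSpace E]
    [NormedAddCommGroup F] [NormedSpace ℝ F] [CompleteSpace F]
    (f : E → F) (x : ℝ → E) (t₀ : ℝ) (ht₀ : t₀ ∈ Set.Ioo (0 : ℝ) 1)
    (hf : ContDiffAt ℝ 3 f (x t₀))
    (hx1 : ∀ᶠ s in 𝓝 t₀, DifferentiableAt ℝ x s)
    (hx2 : ∀ᶠ s in 𝓝 t₀, DifferentiableAt ℝ (iteratedDeriv 1 x) s)
    (hx3 : DifferentiableAt ℝ (iteratedDeriv 2 x) t₀)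
    (hpath : ∀ t ∈ Set.Icc (0 : ℝ) 1, f (x t) = (1 - t) • f (x 0))
    (J : E ≃L[ℝ] F) (hJ : (J : E →L[ℝ] F) = fderiv ℝ f (x t₀)) :
    iteratedDeriv 3 x t₀ =
      -J.symm (iteratedFDeriv ℝ 3 f (x t₀) ![deriv x t₀, deriv x t₀, deriv x t₀]
        + (3 : ℝ) • iteratedFDeriv ℝ 2 f (x t₀) ![deriv x t₀, iteratedDeriv 2 x t₀]) := by
  -- notation
  set p := x t₀ with hp
  set v : ℝ → E := deriv x with hv
  set w : ℝ → E := deriv v with hw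
  have hiter1 : iteratedDeriv 1 x = v := by rw [iteratedDeriv_one]
  have hiter2 : iteratedDeriv 2 x = w := by
    rw [show (2 : ℕ) = 1 + 1 from rfl, iteratedDeriv_succ, hiter1]
  have hiter3 : iteratedDeriv 3 x t₀ = deriv w t₀ := by
    rw [show (3 : ℕ) = 2 + 1 from rfl, iteratedDeriv_succ, hiter2]
  rw [hiter1] at hx2
  rw [hiter2] at hx3
  set z : E := deriv w t₀ with hz
  -- continuity of x at t₀
  have hxd : DifferentiableAt ℝ x t₀ := hx1.self_of_nhds
  have hxc : ContinuousAt x t₀ := hxd.continuousAt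
  -- f is C³ near points x s
  have hfe : ∀ᶠ s in 𝓝 t₀, ContDiffAt ℝ 3 f (x s) :=
    hxc.tendsto.eventually (hf.eventually (by norm_num))
  -- the pathway equation near t₀
  set c : F := f (x 0) with hc
  have heq : (fun t => f (x t)) =ᶠ[𝓝 t₀] (fun t => (1 - t) • c) := by
    filter_upwards [Ioo_mem_nhds ht₀.1 ht₀.2] with s hs
    exact hpath s ⟨le_of_lt hs.1, le_of_lt hs.2⟩
  -- first derivative of pathway
  have F1 : ∀ᶠ s in 𝓝 t₀, HasDerivAt (fun t => f (x t)) (fderiv ℝ f (x s) (v s)) s := by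
    filter_upwards [hx1, hfe] with s hxs hfs
    exact (hfs.differentiableAt (by norm_num)).hasFDerivAt.comp_hasDerivAt s hxs.hasDerivAt
  have Eq1 : (fun s => fderiv ℝ f (x s) (v s)) =ᶠ[𝓝 t₀] (fun _ => -c) := by
    filter_upwards [F1, heq.deriv] with s hF1 hders
    have h2 : HasDerivAt (fun t : ℝ => (1 - t) • c) ((-1 : ℝ) • c) s := by
      simpa using ((hasDerivAt_id s).const_sub 1).smul_const c
    rw [← hF1.deriv, hders, h2.deriv, neg_one_smul]
  -- second derivative of pathway
  have F2 : ∀ᶠ s in 𝓝 t₀, HasDerivAt (fun u => fderiv ℝ f (x u) (v u))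
      (fderiv ℝ (fderiv ℝ f) (x s) (v s) (v s) + fderiv ℝ f (x s) (w s)) s := by
    filter_upwards [hx1, hx2, hfe] with s hxs hx2s hfs
    have hA : HasDerivAt (fun u => fderiv ℝ f (x u)) (fderiv ℝ (fderiv ℝ f) (x s) (v s)) s :=
      ((hfs.fderiv_right (m := 2) (by norm_num)).differentiableAt
        (by norm_num)).hasFDerivAt.comp_hasDerivAt s hxs.hasDerivAt
    exact hA.clm_apply hx2s.hasDerivAt
  have Eq2 : (fun s => fderiv ℝ (fderiv ℝ f) (x s) (v s) (v s) + fderiv ℝ f (x s) (w s))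
      =ᶠ[𝓝 t₀] (fun _ => (0 : F)) := by
    filter_upwards [F2, Eq1.deriv] with s hF2 hders
    rw [← hF2.deriv, hders, deriv_const]
  -- third derivative of pathway, at t₀ only
  have hv0 : HasDerivAt v (w t₀) t₀ := hx2.self_of_nhds.hasDerivAt
  have hw0 : HasDerivAt w z t₀ := hx3.hasDerivAt
  have hA : HasDerivAt (fun u => fderiv ℝ f (x u)) (fderiv ℝ (fderiv ℝ f) p (v t₀)) t₀ :=
    ((hf.fderiv_right (m := 2) (by norm_num)).differentiableAt
      (by norm_num)).hasFDerivAt.comp_hasDerivAt t₀ hxd.hasDerivAt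
  have hB : HasDerivAt (fun u => fderiv ℝ (fderiv ℝ f) (x u))
      (fderiv ℝ (fderiv ℝ (fderiv ℝ f)) p (v t₀)) t₀ :=
    (((hf.fderiv_right (m := 2) (by norm_num)).fderiv_right (m := 1) (by norm_num)).differentiableAt
      (by norm_num)).hasFDerivAt.comp_hasDerivAt t₀ hxd.hasDerivAt
  have F3 : HasDerivAt
      (fun s => fderiv ℝ (fderiv ℝ f) (x s) (v s) (v s) + fderiv ℝ f (x s) (w s))
      ((fderiv ℝ (fderiv ℝ (fderiv ℝ f)) p (v t₀) (v t₀)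
          + fderiv ℝ (fderiv ℝ f) p (w t₀)) (v t₀)
        + fderiv ℝ (fderiv ℝ f) p (v t₀) (w t₀)
        + (fderiv ℝ (fderiv ℝ f) p (v t₀) (w t₀) + fderiv ℝ f p z)) t₀ :=
    ((hB.clm_apply hv0).clm_apply hv0).add (hA.clm_apply hw0)
  have hT : (fderiv ℝ (fderiv ℝ (fderiv ℝ f)) p (v t₀) (v t₀)
          + fderiv ℝ (fderiv ℝ f) p (w t₀)) (v t₀)
        + fderiv ℝ (fderiv ℝ f) p (v t₀) (w t₀)
        + (fderiv ℝ (fderiv ℝ f) p (v t₀) (w t₀) + fderiv ℝ f p z) = 0 := by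
    rw [← F3.deriv, Eq2.deriv.self_of_nhds, deriv_const]
  -- symmetry of the second derivative
  have hsym : fderiv ℝ (fderiv ℝ f) p (w t₀) (v t₀) = fderiv ℝ (fderiv ℝ f) p (v t₀) (w t₀) :=
    (hf.isSymmSndFDerivAt (by norm_num)).eq _ _
  have hT' : fderiv ℝ (fderiv ℝ (fderiv ℝ f)) p (v t₀) (v t₀) (v t₀)
      + (3 : ℝ) • fderiv ℝ (fderiv ℝ f) p (v t₀) (w t₀) + J z = 0 := by
    have := hT
    simp only [ContinuousLinearMap.add_apply, hsym] at this
    have hJz0 : J z = fderiv ℝ f p z := by rw [← hJ]; rfl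
    rw [hJz0]
    linear_combination (norm := module) this
  -- conclude
  have hJz : z = -J.symm (fderiv ℝ (fderiv ℝ (fderiv ℝ f)) p (v t₀) (v t₀) (v t₀)
      + (3 : ℝ) • fderiv ℝ (fderiv ℝ f) p (v t₀) (w t₀)) := by
    have : J z = -(fderiv ℝ (fderiv ℝ (fderiv ℝ f)) p (v t₀) (v t₀) (v t₀)
        + (3 : ℝ) • fderiv ℝ (fderiv ℝ f) p (v t₀) (w t₀)) := by
      linear_combination (norm := module) hT'
    rw [← J.symm_apply_apply z, this, map_neg]
  rw [hiter3, hiter2, hJz, iteratedFDeriv_three_apply', iteratedFDeriv_two_apply]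
  simp
end

section
/- Suppose f is C² on a neighbourhood of x(0), x is twice differentiable at 0 from the right along the pathway, the natural pathway equation f(x(t)) = (1−t) • f(x(0)) holds for all t ∈ [0,1], and J := f′(x(0)) is a continuous linear isomorphism from E onto F. Fix ε ∈ ℝ and define the order-n correction c_n := (εⁿ/n!) • x⁽ⁿ⁾(0). Then f″(x(0))[c₁,c₁] + 2 • J(c₂) = 0, and hence c₂ = −(1/2) • J⁻¹( f″(x(0))[c₁,c₁] ); in particular this expression for c₂ is independent of the choice of parameterisation scale ε once c₁ is given. -/
/-!
Differentiating the pathway equation once gives `f′(x t) (x′ t) = -f (x 0)` for all small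
`t ≥ 0`, so the left-hand side is constant near `0`. Differentiating it once more by the
second-order chain rule gives `f″(x 0)[x′ 0, x′ 0] + f′(x 0) (x″ 0) = 0`; scaling by `ε²` yields
the identity for `c₁, c₂`, and applying `J⁻¹` solves it for `c₂`.
-/

open Topology Set Filter

section

variable {E F : Type*} [NormedAddCommGroup E] [NormedSpace ℝ E]
  [NormedAddCommGroup F] [NormedSpace ℝ F]

theorem ContinuousMultilinearMap.apply_smul_smul_two
    (M : ContinuousMultilinearMap ℝ (fun _ : Fin 2 => E) F) (a : ℝ) (v : E) :
    M ![a • v, a • v] = a ^ 2 • M ![v, v] := by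
  have h := M.map_smul_univ (fun _ => a) ![v, v]
  simp only [Finset.prod_const, Finset.card_univ, Fintype.card_fin] at h
  rw [← h]
  congr 1
  ext i
  fin_cases i <;> rfl

theorem ContinuousLinearEquiv.eq_neg_half_smul_symm_of_add_two_smul_eq_zero (J : E ≃L[ℝ] F)
    {a : F} {c : E} (h : a + (2 : ℝ) • J c = 0) : c = -(1 / 2 : ℝ) • J.symm a := by
  rw [eq_neg_of_add_eq_zero_left h, map_neg, map_smul, J.symm_apply_apply, smul_neg, neg_smul,
    neg_neg, smul_smul]
  norm_num

theorem hasDerivWithinAt_Ici_of_eq_one_sub_smul {g : ℝ → F}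
    (hg : ∀ t ∈ Icc (0 : ℝ) 1, g t = (1 - t) • g 0) {t : ℝ} (ht : t ∈ Ico (0 : ℝ) 1) :
    HasDerivWithinAt g (-g 0) (Ici 0) t := by
  have hline : HasDerivWithinAt (fun u : ℝ => (1 - u) • g 0) (-g 0) (Ici 0) t := by
    simpa using (((hasDerivAt_id t).const_sub 1).smul_const (g 0)).hasDerivWithinAt
  have heq : g =ᶠ[𝓝[Ici 0] t] fun u => (1 - u) • g 0 := by
    filter_upwards [inter_mem_nhdsWithin (Ici 0) (Iio_mem_nhds ht.2)] with u hu
    exact hg u ⟨hu.1, hu.2.le⟩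
  exact hline.congr_of_eventuallyEq heq (hg t (Ico_subset_Icc_self ht))

theorem eventually_fderiv_apply_derivWithin_eq_neg {f : E → F} {x : ℝ → E}
    (hf : ∀ᶠ y in 𝓝 (x 0), DifferentiableAt ℝ f y)
    (hx : ∀ᶠ t in 𝓝[≥] (0 : ℝ), DifferentiableWithinAt ℝ x (Ici 0) t)
    (hpath : ∀ t ∈ Icc (0 : ℝ) 1, f (x t) = (1 - t) • f (x 0)) :
    ∀ᶠ t in 𝓝[≥] (0 : ℝ), fderiv ℝ f (x t) (derivWithin x (Ici 0) t) = -f (x 0) := by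
  have hcont : Tendsto x (𝓝[≥] 0) (𝓝 (x 0)) :=
    (hx.self_of_nhdsWithin self_mem_Ici).continuousWithinAt
  filter_upwards [hx, hcont.eventually hf, nhdsWithin_le_nhds (eventually_lt_nhds one_pos),
    self_mem_nhdsWithin] with t hxt hft ht1 ht0
  have hchain := hft.hasFDerivAt.comp_hasDerivWithinAt t hxt.hasDerivWithinAt
  have hline := hasDerivWithinAt_Ici_of_eq_one_sub_smul (g := f ∘ x) hpath ⟨ht0, ht1⟩
  exact (uniqueDiffOn_Ici 0 t ht0).eq_deriv _ hchain hline

theorem hasDerivWithinAt_fderiv_apply_derivWithin {f : E → F} {x : ℝ → E} {s : Set ℝ} {t : ℝ}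
    (hf : ContDiffAt ℝ 2 f (x t)) (hx : DifferentiableWithinAt ℝ x s t)
    (hx' : DifferentiableWithinAt ℝ (derivWithin x s) s t) :
    HasDerivWithinAt (fun u => fderiv ℝ f (x u) (derivWithin x s u))
      (iteratedFDeriv ℝ 2 f (x t) ![derivWithin x s t, derivWithin x s t] +
        fderiv ℝ f (x t) (iteratedDerivWithin 2 x s t)) s t := by
  have hf' : HasFDerivAt (fderiv ℝ f) (fderiv ℝ (fderiv ℝ f) (x t)) (x t) :=
    ((hf.fderiv_right le_rfl).differentiableAt one_ne_zero).hasFDerivAt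
  rw [iteratedFDeriv_two_apply, iteratedDerivWithin_succ', iteratedDerivWithin_one]
  exact (hf'.comp_hasDerivWithinAt t hx.hasDerivWithinAt).clm_apply hx'.hasDerivWithinAt

end

theorem correction_second_order_general
    {E F : Type*} [NormedAddCommGroup E] [NormedSpace ℝ E]
    [NormedAddCommGroup F] [NormedSpace ℝ F]
    (f : E → F) (x : ℝ → E)
    (hf : ContDiffAt ℝ 2 f (x 0))
    (hx1 : ∀ᶠ s in 𝓝[≥] (0 : ℝ), DifferentiableWithinAt ℝ x (Set.Ici 0) s)
    (hx2 : DifferentiableWithinAt ℝ (derivWithin x (Set.Ici 0)) (Set.Ici 0) 0)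
    (hpath : ∀ t ∈ Set.Icc (0 : ℝ) 1, f (x t) = (1 - t) • f (x 0))
    (J : E ≃L[ℝ] F) (hJ : (J : E →L[ℝ] F) = fderiv ℝ f (x 0))
    (ε : ℝ) (c₁ c₂ : E)
    (hc₁ : c₁ = ε • derivWithin x (Set.Ici 0) 0)
    (hc₂ : c₂ = (ε ^ 2 / 2) • iteratedDerivWithin 2 x (Set.Ici 0) 0) :
    iteratedFDeriv ℝ 2 f (x 0) ![c₁, c₁] + (2 : ℝ) • J c₂ = 0 ∧
    c₂ = -(1 / 2 : ℝ) • J.symm (iteratedFDeriv ℝ 2 f (x 0) ![c₁, c₁]) := by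
  have hfd : ∀ᶠ y in 𝓝 (x 0), DifferentiableAt ℝ f y := by
    filter_upwards [hf.eventually (by norm_num)] with y hy
    exact hy.differentiableAt (by norm_num)
  have hconst := eventually_fderiv_apply_derivWithin_eq_neg hfd hx1 hpath
  have hzero := (hasDerivWithinAt_const (0 : ℝ) (Ici 0) (-f (x 0))).congr_of_eventuallyEq
    hconst (hconst.self_of_nhdsWithin self_mem_Ici)
  have hsecond := (uniqueDiffOn_Ici 0 0 self_mem_Ici).eq_deriv _
    (hasDerivWithinAt_fderiv_apply_derivWithin hf (hx1.self_of_nhdsWithin self_mem_Ici) hx2)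
    hzero
  rw [← hJ, ContinuousLinearEquiv.coe_coe] at hsecond
  have hsum : iteratedFDeriv ℝ 2 f (x 0) ![c₁, c₁] + (2 : ℝ) • J c₂ = 0 := by
    rw [hc₁, hc₂, ContinuousMultilinearMap.apply_smul_smul_two, map_smul, smul_smul,
      mul_div_cancel₀ _ two_ne_zero, ← smul_add, hsecond, smul_zero]
  exact ⟨hsum, J.eq_neg_half_smul_symm_of_add_two_smul_eq_zero hsum⟩

/-- Finite-step correction identity at second order: with
`c_n := (εⁿ/n!) • x⁽ⁿ⁾(0)` (derivatives taken from the right along the pathway),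
`f″(x 0)[c₁,c₁] + 2 • J c₂ = 0`, hence `c₂ = -(1/2) • J⁻¹ (f″(x 0)[c₁,c₁])`. -/
theorem correction_second_order
    {E F : Type*} [NormedAddCommGroup E] [NormedSpace ℝ E] [CompleteSpace E]
    [NormedAddCommGroup F] [NormedSpace ℝ F] [CompleteSpace F]
    (f : E → F) (x : ℝ → E)
    (hf : ContDiffAt ℝ 2 f (x 0))
    (hx1 : ∀ᶠ s in 𝓝[≥] (0 : ℝ), DifferentiableWithinAt ℝ x (Set.Ici 0) s)
    (hx2 : DifferentiableWithinAt ℝ (derivWithin x (Set.Ici 0)) (Set.Ici 0) 0)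
    (hpath : ∀ t ∈ Set.Icc (0 : ℝ) 1, f (x t) = (1 - t) • f (x 0))
    (J : E ≃L[ℝ] F) (hJ : (J : E →L[ℝ] F) = fderiv ℝ f (x 0))
    (ε : ℝ) (c₁ c₂ : E)
    (hc₁ : c₁ = ε • derivWithin x (Set.Ici 0) 0)
    (hc₂ : c₂ = (ε ^ 2 / 2) • iteratedDerivWithin 2 x (Set.Ici 0) 0) :
    iteratedFDeriv ℝ 2 f (x 0) ![c₁, c₁] + (2 : ℝ) • J c₂ = 0 ∧
    c₂ = -(1 / 2 : ℝ) • J.symm (iteratedFDeriv ℝ 2 f (x 0) ![c₁, c₁]) :=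
  correction_second_order_general f x hf hx1 hx2 hpath J hJ ε c₁ c₂ hc₁ hc₂
end

section
/- Let f be C⁴ on a neighbourhood of x₀ and fix v ∈ E. Define the nonlinear part f_nl(a) := f(x₀ + a) − f(x₀) − f′(x₀)(a). Then the three-point stencil for the second directional derivative is fourth-order accurate: the function ε ↦ 16 • f_nl((ε/2)•v) − 2 • f_nl(ε•v) − ε² • f″(x₀)[v,v] is O(ε⁴) as ε → 0. -/
/-!
Restricting `f` to the line `t ↦ x₀ + t • v` reduces the claim to a `C⁴` function
`g : ℝ → F`, whose first two derivatives at `0` are `f′(x₀) v` and `f″(x₀)[v,v]`.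
Expanding `g` to fourth order by Taylor's theorem, the weights `16` and `-2` at the nodes
`ε/2` and `ε` cancel the cubic terms and leave exactly `ε² g″(0)` up to `O(ε⁴)`.
-/

open Topology Asymptotics Filter Metric Nat

theorem ContDiffAt.isLittleO_taylor {E : Type*} [NormedAddCommGroup E] [NormedSpace ℝ E]
    {g : ℝ → E} {x₀ : ℝ} {n : ℕ} (hg : ContDiffAt ℝ n g x₀) :
    (fun x ↦ g x - ∑ k ∈ Finset.range (n + 1),
        ((k ! : ℝ)⁻¹ * (x - x₀) ^ k) • iteratedDeriv k g x₀)
      =o[𝓝 x₀] fun x ↦ (x - x₀) ^ n := by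
  obtain ⟨r, hr, hball⟩ := eventually_nhds_iff_ball.1 (hg.eventually (by simp))
  have hx₀ : x₀ ∈ ball x₀ r := mem_ball_self hr
  have h := taylor_isLittleO (convex_ball x₀ r) hx₀ fun y hy ↦ (hball y hy).contDiffWithinAt
  rw [nhdsWithin_eq_nhds.2 (isOpen_ball.mem_nhds hx₀)] at h
  refine h.congr_left fun x ↦ ?_
  simp only [taylor_within_apply, iteratedDerivWithin_of_isOpen isOpen_ball hx₀]

theorem second_difference_sub_isBigO_pow_four {F : Type*} [NormedAddCommGroup F]
    [NormedSpace ℝ F] {g : ℝ → F} (hg : ContDiffAt ℝ 4 g 0) :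
    (fun ε : ℝ ↦ (16 : ℝ) • (g (ε / 2) - g 0 - (ε / 2) • deriv g 0)
        - (2 : ℝ) • (g ε - g 0 - ε • deriv g 0) - ε ^ 2 • iteratedDeriv 2 g 0)
      =O[𝓝 0] fun ε ↦ ε ^ 4 := by
  have hR := (hg.isLittleO_taylor (n := 4)).isBigO
  simp only [sub_zero] at hR
  have hhalf : Tendsto (fun ε : ℝ ↦ ε / 2) (𝓝 0) (𝓝 0) := by
    simpa using (continuous_id.div_const (2 : ℝ)).tendsto 0
  have hR_half := (hR.comp_tendsto hhalf).trans
    (isBigO_const_mul_self ((2 : ℝ)⁻¹ ^ 4) (fun ε : ℝ ↦ ε ^ 4) _ |>.congr_left fun ε ↦ by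
      simp only [Function.comp_apply]; ring)
  have hd4 : (fun ε : ℝ ↦ (ε ^ 4 / 24) • iteratedDeriv 4 g 0) =O[𝓝 0] fun ε ↦ ε ^ 4 :=
    ((isBigO_const_mul_self (24 : ℝ)⁻¹ (fun ε : ℝ ↦ ε ^ 4) _).smul
      (isBigO_const_one ℝ (iteratedDeriv 4 g 0) _)).congr (fun ε ↦ by simp [div_eq_inv_mul])
      fun ε ↦ by simp
  -- the quartic Taylor terms do not cancel: `16 (ε/2)⁴ - 2 ε⁴ = -ε⁴`
  refine ((hR_half.const_smul_left (16 : ℝ)).sub (hR.const_smul_left (2 : ℝ))).sub hd4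
    |>.congr_left fun ε ↦ ?_
  simp only [Pi.smul_apply, Function.comp_apply, Finset.sum_range_succ, Finset.sum_range_zero,
    iteratedDeriv_zero, iteratedDeriv_one, Nat.factorial]
  push_cast
  module

theorem iteratedDeriv_two_comp_add_smul {𝕜 E F : Type*} [NontriviallyNormedField 𝕜]
    [NormedAddCommGroup E] [NormedSpace 𝕜 E] [NormedAddCommGroup F] [NormedSpace 𝕜 F]
    {f : E → F} {x : E} (v : E) (hf : ContDiffAt 𝕜 2 f x) :
    iteratedDeriv 2 (fun t : 𝕜 ↦ f (x + t • v)) 0 = iteratedFDeriv 𝕜 2 f x ![v, v] := by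
  set γ : 𝕜 → E := fun t ↦ x + t • v
  have hγ_deriv : deriv γ = fun _ ↦ v := funext fun t ↦
    ((((hasDerivAt_id' t).smul_const v).const_add x).congr_deriv (one_smul 𝕜 v)).deriv
  have hγ_deriv₂ : iteratedDeriv 2 γ 0 = 0 := by
    rw [iteratedDeriv_succ, iteratedDeriv_one, hγ_deriv, deriv_const]
  have h := iteratedDeriv_vcomp_two (x := (0 : 𝕜)) (f := γ) (by simpa [γ] using hf)
    (contDiffAt_const.add (contDiffAt_id.smul contDiffAt_const))
  rw [hγ_deriv, hγ_deriv₂, map_zero, add_zero] at h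
  simp only [γ, zero_smul, add_zero, Function.comp_def] at h
  rw [h]
  congr 1
  ext i
  fin_cases i <;> rfl

theorem second_directional_derivative_stencil_order4_general
    {E F : Type*} [NormedAddCommGroup E] [NormedSpace ℝ E]
    [NormedAddCommGroup F] [NormedSpace ℝ F]
    (f : E → F) (x₀ v : E)
    (hf : ContDiffAt ℝ 4 f x₀)
    (fnl : E → F) (hfnl : ∀ a, fnl a = f (x₀ + a) - f x₀ - fderiv ℝ f x₀ a) :
    (fun ε : ℝ =>
        (16 : ℝ) • fnl ((ε / 2) • v) - (2 : ℝ) • fnl (ε • v)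
          - ε ^ 2 • iteratedFDeriv ℝ 2 f x₀ ![v, v])
      =O[𝓝 (0 : ℝ)] fun ε => ε ^ 4 := by
  set g : ℝ → F := fun t ↦ f (x₀ + t • v)
  have hg : ContDiffAt ℝ 4 g 0 :=
    ContDiffAt.comp (g := f) 0 (by simpa using hf)
      (contDiffAt_const.add (contDiffAt_id.smul contDiffAt_const))
  have hg₁ : deriv g 0 = fderiv ℝ f x₀ v :=
    (hf.differentiableAt (by norm_num)).lineDeriv_eq_fderiv
  have hg₂ : iteratedDeriv 2 g 0 = iteratedFDeriv ℝ 2 f x₀ ![v, v] :=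
    iteratedDeriv_two_comp_add_smul v (hf.of_le (by norm_num))
  refine (second_difference_sub_isBigO_pow_four hg).congr_left fun ε ↦ ?_
  simp only [hfnl, map_smul, ← hg₁, ← hg₂, g, zero_smul, add_zero]

/-- Third-order-accurate two-point stencil (plus base point and Jacobian)
for the second directional derivative:
`16 • f_nl((ε/2)•v) - 2 • f_nl(ε•v) = ε² • f″(x₀)[v,v] + O(ε⁴)`. -/
theorem second_directional_derivative_stencil_order4
    {E F : Type*} [NormedAddCommGroup E] [NormedSpace ℝ E] [CompleteSpace E]
    [NormedAddCommGroup F] [NormedSpace ℝ F] [CompleteSpace F]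
    (f : E → F) (x₀ v : E)
    (hf : ContDiffAt ℝ 4 f x₀)
    (fnl : E → F) (hfnl : ∀ a, fnl a = f (x₀ + a) - f x₀ - fderiv ℝ f x₀ a) :
    (fun ε : ℝ =>
        (16 : ℝ) • fnl ((ε / 2) • v) - (2 : ℝ) • fnl (ε • v)
          - ε ^ 2 • iteratedFDeriv ℝ 2 f x₀ ![v, v])
      =O[𝓝 (0 : ℝ)] fun ε => ε ^ 4 :=
  second_directional_derivative_stencil_order4_general f x₀ v hf fnl hfnl
end

section
/- Let f be C⁴ on a neighbourhood of x₀ and fix v ∈ E. Define the nonlinear part f_nl(a) := f(x₀ + a) − f(x₀) − f′(x₀)(a). Then the three-point stencil for the third directional derivative is fourth-order accurate: the function ε ↦ 12 • f_nl(ε•v) − 48 • f_nl((ε/2)•v) − ε³ • f⁽³⁾(x₀)[v,v,v] is O(ε⁴) as ε → 0. -/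
/-!
Along the line `t ↦ x₀ + t • v`, a `Cⁿ` map has the Taylor expansion
`f (x₀ + t • v) = ∑ k < n, t ^ k / k! • D^k f(x₀)[v, …, v] + O(tⁿ)`. This is proved by induction
on `n`: the `t`-derivative of the remainder is the remainder of `y ↦ Df(y) v` at order `n - 1`,
and the mean value inequality turns an `O(tⁿ⁻¹)` derivative into an `O(tⁿ)` function.
With `n = 4`, in `12 f_nl(ε v) - 48 f_nl(ε v / 2)` the `ε²` terms cancel (`12 / 2 = 48 / 8`)
and the `ε³` coefficient is `12 / 6 - 48 / 48 = 1`.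
-/

open Topology Asymptotics Filter Finset Nat

theorem Asymptotics.IsBigO.comp_const_mul_pow {F : Type*} [NormedAddCommGroup F] {f : ℝ → F}
    {n : ℕ} (h : f =O[𝓝 0] fun t ↦ t ^ n) (c : ℝ) :
    (fun t ↦ f (c * t)) =O[𝓝 0] fun t ↦ t ^ n := by
  have hc : Tendsto (c * ·) (𝓝 0) (𝓝 0) := by
    simpa using (continuous_const_mul c).tendsto 0
  refine (h.comp_tendsto hc).trans ?_
  simpa only [Function.comp_def, mul_pow] using
    (isBigO_refl (fun t : ℝ ↦ t ^ n) _).const_mul_left (c ^ n)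

section

variable {E F : Type*} [NormedAddCommGroup E] [NormedSpace ℝ E]
  [NormedAddCommGroup F] [NormedSpace ℝ F]

theorem isBigO_sub_pow_succ_of_hasDerivAt {f f' : ℝ → F} {x₀ : ℝ} {n : ℕ}
    (hff' : ∀ᶠ x in 𝓝 x₀, HasDerivAt f (f' x) x) (hf' : f' =O[𝓝 x₀] fun x ↦ (x - x₀) ^ n) :
    (fun x ↦ f x - f x₀) =O[𝓝 x₀] fun x ↦ (x - x₀) ^ (n + 1) := by
  obtain ⟨c, hc0, hc⟩ := hf'.exists_nonneg
  have hseg : ∀ᶠ x in 𝓝 x₀, ∀ y ∈ segment ℝ x₀ x,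
      HasDerivAt f (f' y) y ∧ ‖f' y‖ ≤ c * ‖(y - x₀) ^ n‖ := by
    simpa only [nhdsWithin_univ] using convex_univ.eventually_nhdsWithin_segment (Set.mem_univ x₀)
      (by simpa only [nhdsWithin_univ] using hff'.and hc.bound)
  refine .of_bound c ?_
  filter_upwards [hseg] with x hx
  have bound : ∀ y ∈ segment ℝ x₀ x, ‖f' y‖ ≤ c * ‖x - x₀‖ ^ n := fun y hy ↦ by
    refine (hx y hy).2.trans ?_
    rw [norm_pow]
    gcongr
    exact norm_sub_le_of_mem_segment hy
  calc ‖f x - f x₀‖ ≤ c * ‖x - x₀‖ ^ n * ‖x - x₀‖ :=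
        (convex_segment x₀ x).norm_image_sub_le_of_norm_hasDerivWithin_le
          (fun y hy ↦ (hx y hy).1.hasDerivWithinAt) bound
          (left_mem_segment ℝ x₀ x) (right_mem_segment ℝ x₀ x)
    _ = c * ‖(x - x₀) ^ (n + 1)‖ := by rw [norm_pow, pow_succ, mul_assoc]

theorem hasDerivAt_sum_range_pow_div_factorial_smul (a : ℕ → F) (n : ℕ) (t : ℝ) :
    HasDerivAt (fun t : ℝ ↦ ∑ k ∈ range (n + 1), (t ^ k / k !) • a k)
      (∑ k ∈ range n, (t ^ k / k !) • a (k + 1)) t := by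
  simp only [sum_range_succ', pow_zero, factorial_zero, cast_one, div_one, one_smul]
  refine (HasDerivAt.fun_sum fun k _ ↦ ?_).add_const _
  have := ((hasDerivAt_pow (k + 1) t).div_const ((k + 1) ! : ℝ)).smul_const (a (k + 1))
  convert this using 2
  rw [factorial_succ, cast_mul, add_tsub_cancel_right]
  field_simp

theorem ContDiffAt.iteratedFDeriv_succ_apply_const {f : E → F} {x : E} {k : ℕ}
    (hf : ContDiffAt ℝ (k + 1) f x) (v : E) :
    iteratedFDeriv ℝ (k + 1) f x (fun _ ↦ v) =
      iteratedFDeriv ℝ k (fun y ↦ fderiv ℝ f y v) x (fun _ ↦ v) := by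
  have happly : (fun y ↦ fderiv ℝ f y v) = ContinuousLinearMap.apply ℝ F v ∘ fderiv ℝ f := rfl
  rw [iteratedFDeriv_succ_apply_right, happly,
    ContinuousLinearMap.iteratedFDeriv_comp_left _ hf.fderiv_right_succ le_rfl]
  rfl

theorem ContDiffAt.isBigO_sub_taylor_along_line {f : E → F} {x : E} {n : ℕ}
    (hf : ContDiffAt ℝ n f x) (v : E) :
    (fun t : ℝ ↦ f (x + t • v) - ∑ k ∈ range n, (t ^ k / k !) • iteratedFDeriv ℝ k f x (fun _ ↦ v))
      =O[𝓝 0] fun t ↦ t ^ n := by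
  have hline : Tendsto (fun t : ℝ ↦ x + t • v) (𝓝 0) (𝓝 x) := by
    simpa using ((continuous_id.smul continuous_const).const_add x).tendsto (0 : ℝ)
  induction n generalizing f with
  | zero => simpa using (hf.continuousAt.tendsto.comp hline).isBigO_one ℝ
  | succ n ih =>
    set R := fun t : ℝ ↦
      f (x + t • v) - ∑ k ∈ range (n + 1), (t ^ k / k !) • iteratedFDeriv ℝ k f x (fun _ ↦ v)
    have hR0 : R 0 = 0 := by simp [R, sum_range_succ']
    have hdiff : ∀ᶠ t in 𝓝 (0 : ℝ), DifferentiableAt ℝ f (x + t • v) :=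
      hline.eventually <| (hf.eventually (by simp)).mono fun y hy ↦ hy.differentiableAt (by simp)
    have hfderiv : ContDiffAt ℝ n (fun y ↦ fderiv ℝ f y v) x :=
      (hf.fderiv_right (by norm_cast)).clm_apply contDiffAt_const
    have hR' : ∀ᶠ t : ℝ in 𝓝 0, HasDerivAt R (fderiv ℝ f (x + t • v) v -
        ∑ k ∈ range n, (t ^ k / k !) • iteratedFDeriv ℝ k (fun y ↦ fderiv ℝ f y v) x (fun _ ↦ v)) t := by
      filter_upwards [hdiff] with t ht
      have hf' := ht.hasFDerivAt.comp_hasDerivAt t (((hasDerivAt_id t).smul_const v).const_add x)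
      refine (hf'.sub (hasDerivAt_sum_range_pow_div_factorial_smul _ n t)).congr_deriv ?_
      simp only [one_smul, sub_right_inj]
      refine sum_congr rfl fun k hk ↦ ?_
      rw [(hf.of_le (by norm_cast; simp at hk; omega)).iteratedFDeriv_succ_apply_const]
    simpa [hR0] using isBigO_sub_pow_succ_of_hasDerivAt hR' (by simpa only [sub_zero] using ih hfderiv)

end

theorem third_directional_derivative_stencil_order4_general
    {E F : Type*} [NormedAddCommGroup E] [NormedSpace ℝ E]
    [NormedAddCommGroup F] [NormedSpace ℝ F]
    (f : E → F) (x₀ v : E)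
    (hf : ContDiffAt ℝ 4 f x₀)
    (fnl : E → F) (hfnl : ∀ a, fnl a = f (x₀ + a) - f x₀ - fderiv ℝ f x₀ a) :
    (fun ε : ℝ =>
        (12 : ℝ) • fnl (ε • v) - (48 : ℝ) • fnl ((ε / 2) • v)
          - ε ^ 3 • iteratedFDeriv ℝ 3 f x₀ ![v, v, v])
      =O[𝓝 (0 : ℝ)] fun ε => ε ^ 4 := by
  set R := fun t : ℝ ↦
    f (x₀ + t • v) - ∑ k ∈ range 4, (t ^ k / k !) • iteratedFDeriv ℝ k f x₀ (fun _ ↦ v)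
  have hR : R =O[𝓝 0] fun t ↦ t ^ 4 := hf.isBigO_sub_taylor_along_line v
  have hvvv : ![v, v, v] = fun _ ↦ v := by ext i; fin_cases i <;> rfl
  have stencil : ∀ ε : ℝ, (12 : ℝ) • fnl (ε • v) - (48 : ℝ) • fnl ((ε / 2) • v)
      - ε ^ 3 • iteratedFDeriv ℝ 3 f x₀ ![v, v, v] = (12 : ℝ) • R ε - (48 : ℝ) • R (2⁻¹ * ε) := by
    intro ε
    rw [div_eq_inv_mul]
    simp only [R, hfnl, hvvv, map_smul, sum_range_succ, range_one, sum_singleton, pow_zero, pow_one,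
      factorial, cast_one, cast_ofNat, reduceMul, succ_eq_add_one, reduceAdd, zero_add, mul_one,
      div_one, one_smul, iteratedFDeriv_zero_apply, iteratedFDeriv_one_apply]
    module
  simpa only [stencil, Pi.smul_apply] using
    (hR.const_smul_left 12).sub ((hR.comp_const_mul_pow 2⁻¹).const_smul_left 48)

/-- Third-order-accurate stencil for the third directional derivative:
`12 • f_nl(ε•v) - 48 • f_nl((ε/2)•v) = ε³ • f⁽³⁾(x₀)[v,v,v] + O(ε⁴)`. -/
theorem third_directional_derivative_stencil_order4
    {E F : Type*} [NormedAddCommGroup E] [NormedSpace ℝ E] [CompleteSpace E]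
    [NormedAddCommGroup F] [NormedSpace ℝ F] [CompleteSpace F]
    (f : E → F) (x₀ v : E)
    (hf : ContDiffAt ℝ 4 f x₀)
    (fnl : E → F) (hfnl : ∀ a, fnl a = f (x₀ + a) - f x₀ - fderiv ℝ f x₀ a) :
    (fun ε : ℝ =>
        (12 : ℝ) • fnl (ε • v) - (48 : ℝ) • fnl ((ε / 2) • v)
          - ε ^ 3 • iteratedFDeriv ℝ 3 f x₀ ![v, v, v])
      =O[𝓝 (0 : ℝ)] fun ε => ε ^ 4 :=
  third_directional_derivative_stencil_order4_general f x₀ v hf fnl hfnl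
end

section
/- Let f be C³ on a neighbourhood of x₀ and fix u, w ∈ E. Then the four-point mixed-derivative stencil applied to a first-order direction ε•u and a second-order direction ε²•w is fourth-order accurate: the function ε ↦ f(x₀ + ε•u + ε²•w) − f(x₀ + ε•u) − f(x₀ + ε²•w) + f(x₀) − ε³ • f″(x₀)[u,w] is O(ε⁴) as ε → 0. -/
/-!
Write the stencil as `ψ b - ψ 0` with `ψ c = f (x + c + a) - f (x + c) - D²f(x)[a, c]`.
By the mean value theorem it is at most `‖b‖` times the supremum of
`‖Df(x + c + a) - Df(x + c) - D²f(x)[a]‖` over `‖c‖ ≤ ‖b‖`, and a second mean value estimate,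
using that `D²f` is `K`-Lipschitz near `x`, bounds this by `K (‖a‖ + ‖b‖) ‖a‖`.
For `a = ε • u`, `b = ε² • w` the product `(‖a‖ + ‖b‖) ‖a‖ ‖b‖` is `O(ε⁴)`.
-/

open Topology Asymptotics Filter Metric NNReal

section MixedDifference

variable {E F G : Type*} [NormedAddCommGroup E] [NormedSpace ℝ E]
  [NormedAddCommGroup F] [NormedSpace ℝ F] [NormedAddCommGroup G] [NormedSpace ℝ G]

def mixedDiff (f : E → F) (x a b : E) : F :=
  f (x + a + b) - f (x + a) - f (x + b) + f x

theorem norm_sub_sub_apply_le_of_lipschitzOnWith {g : E → G} {g' : E → E →L[ℝ] G} {x : E}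
    {r : ℝ} {K : ℝ≥0} (hg : ∀ z ∈ ball x r, HasFDerivAt g (g' z) z)
    (hg' : LipschitzOnWith K g' (ball x r)) {y h : E} (hyh : ‖y - x‖ + ‖h‖ < r) :
    ‖g (y + h) - g y - g' x h‖ ≤ K * (‖y - x‖ + ‖h‖) * ‖h‖ := by
  set ρ := ‖y - x‖ + ‖h‖
  have hsub : closedBall x ρ ⊆ ball x r := closedBall_subset_ball hyh
  have hy : y ∈ closedBall x ρ := by simp [ρ, dist_eq_norm]
  have hyh' : y + h ∈ closedBall x ρ := by
    rw [mem_closedBall, dist_eq_norm, add_sub_right_comm]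
    exact norm_add_le _ _
  have bound : ∀ z ∈ closedBall x ρ, ‖g' z - g' x‖ ≤ K * ρ := fun z hz => by
    rw [← dist_eq_norm]
    exact (hg'.dist_le_mul z (hsub hz) x (hsub (mem_closedBall_self (by positivity)))).trans
      (by gcongr; exact mem_closedBall.1 hz)
  simpa using (convex_closedBall x ρ).norm_image_sub_le_of_norm_hasFDerivWithin_le'
    (fun z hz => (hg z (hsub hz)).hasFDerivWithinAt) bound hy hyh'

theorem norm_mixedDiff_sub_le_of_lipschitzOnWith {f : E → F} {f' : E → E →L[ℝ] F}
    {f'' : E → E →L[ℝ] E →L[ℝ] F} {x : E} {r : ℝ} {K : ℝ≥0}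
    (hf : ∀ z ∈ ball x r, HasFDerivAt f (f' z) z)
    (hf' : ∀ z ∈ ball x r, HasFDerivAt f' (f'' z) z)
    (hf'' : LipschitzOnWith K f'' (ball x r)) {a b : E} (hab : ‖a‖ + ‖b‖ < r) :
    ‖mixedDiff f x a b - f'' x a b‖ ≤ K * (‖a‖ + ‖b‖) * ‖a‖ * ‖b‖ := by
  set ψ : E → F := fun c => f (x + c + a) - f (x + c) - f'' x a c
  have hψ : ∀ c ∈ closedBall (0 : E) ‖b‖,
      HasFDerivAt ψ (f' (x + c + a) - f' (x + c) - f'' x a) c := by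
    intro c hc
    rw [mem_closedBall_zero_iff] at hc
    have hxca : x + c + a ∈ ball x r := by
      rw [mem_ball_iff_norm, add_assoc, add_sub_cancel_left]
      exact (norm_add_le _ _).trans_lt (by linarith)
    have hxc : x + c ∈ ball x r := by
      rw [mem_ball_iff_norm, add_sub_cancel_left]
      linarith [norm_nonneg a]
    have h1 := (hf _ hxca).comp c (((hasFDerivAt_id c).const_add x).add_const a)
    have h2 := (hf _ hxc).comp c ((hasFDerivAt_id c).const_add x)
    exact ((h1.sub h2).sub (f'' x a).hasFDerivAt).congr_fderiv (by simp)
  have bound : ∀ c ∈ closedBall (0 : E) ‖b‖,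
      ‖f' (x + c + a) - f' (x + c) - f'' x a‖ ≤ K * (‖a‖ + ‖b‖) * ‖a‖ := by
    intro c hc
    rw [mem_closedBall_zero_iff] at hc
    have hinner := norm_sub_sub_apply_le_of_lipschitzOnWith hf' hf''
      (y := x + c) (h := a) (by rw [add_sub_cancel_left]; linarith)
    rw [add_sub_cancel_left, add_comm ‖c‖] at hinner
    exact hinner.trans (by gcongr)
  have houter := (convex_closedBall (0 : E) ‖b‖).norm_image_sub_le_of_norm_hasFDerivWithin_le
    (fun c hc => (hψ c hc).hasFDerivWithinAt) bound (mem_closedBall_self (norm_nonneg b))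
    (mem_closedBall_zero_iff.2 le_rfl)
  have hdiff : mixedDiff f x a b - f'' x a b = ψ b - ψ 0 := by
    simp only [mixedDiff, ψ, map_zero, add_zero, add_right_comm x a b]
    abel
  rw [hdiff]
  simpa using houter

theorem ContDiffAt.isBigO_mixedDiff_sub_fderiv_fderiv {f : E → F} {x : E}
    (hf : ContDiffAt ℝ 3 f x) {α : Type*} {l : Filter α} {a b : α → E}
    (ha : Tendsto a l (𝓝 0)) (hb : Tendsto b l (𝓝 0)) :
    (fun t => mixedDiff f x (a t) (b t) - fderiv ℝ (fderiv ℝ f) x (a t) (b t))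
      =O[l] fun t => (‖a t‖ + ‖b t‖) * ‖a t‖ * ‖b t‖ := by
  obtain ⟨K, s, hs, hK⟩ :=
    ((hf.fderiv_right (m := 2) (by norm_num)).fderiv_right (m := 1) le_rfl).exists_lipschitzOnWith
  have hev : ∀ᶠ z in 𝓝 x, HasFDerivAt f (fderiv ℝ f z) z ∧
      HasFDerivAt (fderiv ℝ f) (fderiv ℝ (fderiv ℝ f) z) z ∧ z ∈ s := by
    filter_upwards [hf.eventually (by simp), hs] with z hz hzs
    exact ⟨(hz.differentiableAt (by norm_num)).hasFDerivAt,
      ((hz.fderiv_right (m := 2) (by norm_num)).differentiableAt (by norm_num)).hasFDerivAt, hzs⟩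
  obtain ⟨r, hr, hball⟩ := Metric.eventually_nhds_iff_ball.1 hev
  refine IsBigO.of_bound K ?_
  filter_upwards [ha (ball_mem_nhds 0 (half_pos hr)), hb (ball_mem_nhds 0 (half_pos hr))]
    with t hat hbt
  rw [Set.mem_preimage, mem_ball_zero_iff] at hat hbt
  rw [Real.norm_of_nonneg (by positivity), ← mul_assoc, ← mul_assoc]
  exact norm_mixedDiff_sub_le_of_lipschitzOnWith (fun z hz => (hball z hz).1)
    (fun z hz => (hball z hz).2.1) (hK.mono fun z hz => (hball z hz).2.2) (by linarith)

end MixedDifference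

theorem mixed_derivative_stencil_c1_c2_general
    {E F : Type*} [NormedAddCommGroup E] [NormedSpace ℝ E]
    [NormedAddCommGroup F] [NormedSpace ℝ F]
    (f : E → F) (x₀ u w : E)
    (hf : ContDiffAt ℝ 3 f x₀) :
    (fun ε : ℝ =>
        f (x₀ + ε • u + ε ^ 2 • w) - f (x₀ + ε • u) - f (x₀ + ε ^ 2 • w) + f x₀
          - ε ^ 3 • iteratedFDeriv ℝ 2 f x₀ ![u, w])
      =O[𝓝 (0 : ℝ)] fun ε => ε ^ 4 := by
  have hu : Tendsto (fun ε : ℝ => ε • u) (𝓝 0) (𝓝 0) := by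
    simpa using (tendsto_id (x := 𝓝 (0 : ℝ))).smul_const u
  have hw : Tendsto (fun ε : ℝ => ε ^ 2 • w) (𝓝 0) (𝓝 0) := by
    simpa using ((continuous_pow 2).tendsto (0 : ℝ)).smul_const w
  have hu' : (fun ε : ℝ => ‖ε • u‖) =O[𝓝 0] fun ε => ε :=
    IsBigO.of_bound ‖u‖ (.of_forall fun ε => by simp [norm_smul, mul_comm])
  have hw' : (fun ε : ℝ => ‖ε ^ 2 • w‖) =O[𝓝 0] fun ε => ε ^ 2 :=
    IsBigO.of_bound ‖w‖ (.of_forall fun ε => by simp [norm_smul, mul_comm])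
  have hrate : (fun ε : ℝ => (‖ε • u‖ + ‖ε ^ 2 • w‖) * ‖ε • u‖ * ‖ε ^ 2 • w‖)
      =O[𝓝 0] fun ε => ε ^ 4 :=
    (((hu'.add (hw'.trans (isLittleO_pow_id one_lt_two).isBigO)).mul hu').mul hw').congr_right
      fun ε => by ring
  have hsecond (ε : ℝ) : ε ^ 3 • iteratedFDeriv ℝ 2 f x₀ ![u, w]
      = fderiv ℝ (fderiv ℝ f) x₀ (ε • u) (ε ^ 2 • w) := by
    simp [iteratedFDeriv_two_apply, smul_smul, pow_succ]
  simpa only [mixedDiff, hsecond] using (hf.isBigO_mixedDiff_sub_fderiv_fderiv hu hw).trans hrate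

/-- Four-point mixed-derivative stencil with directions `ε•u` and `ε²•w`:
`f(x₀+ε•u+ε²•w) - f(x₀+ε•u) - f(x₀+ε²•w) + f(x₀) = ε³ • f″(x₀)[u,w] + O(ε⁴)`. -/
theorem mixed_derivative_stencil_c1_c2
    {E F : Type*} [NormedAddCommGroup E] [NormedSpace ℝ E] [CompleteSpace E]
    [NormedAddCommGroup F] [NormedSpace ℝ F] [CompleteSpace F]
    (f : E → F) (x₀ u w : E)
    (hf : ContDiffAt ℝ 3 f x₀) :
    (fun ε : ℝ =>
        f (x₀ + ε • u + ε ^ 2 • w) - f (x₀ + ε • u) - f (x₀ + ε ^ 2 • w) + f x₀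
          - ε ^ 3 • iteratedFDeriv ℝ 2 f x₀ ![u, w])
      =O[𝓝 (0 : ℝ)] fun ε => ε ^ 4 :=
  mixed_derivative_stencil_c1_c2_general f x₀ u w hf
end

section
/- Let f be C⁵ on a neighbourhood of x₀ and fix v ∈ E. Define the nonlinear part f_nl(a) := f(x₀ + a) − f(x₀) − f′(x₀)(a). Then the four-point stencil for the second directional derivative is fifth-order accurate: the function ε ↦ 24 • f_nl((ε/2)•v) − 6 • f_nl(ε•v) + (8/9) • f_nl((3ε/2)•v) − ε² • f″(x₀)[v,v] is O(ε⁵) as ε → 0. -/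
/-!
Along the line `t ↦ x₀ + t • v` the function `u t = f (x₀ + t • v)` is `C⁵` near `0`, with
`u⁽ᵏ⁾ 0 = f⁽ᵏ⁾ x₀ [v, …, v]`, and `f_nl (t • v) = u t - u 0 - t • u' 0`. By Taylor's theorem
`u` agrees with its degree-four Taylor polynomial up to `O(t⁵)`, and the stencil weights kill the
cubic and quartic terms while turning the quadratic one into `ε² • u'' 0`.
-/

open Topology Asymptotics Filter
open scoped Nat

theorem ContDiffAt.isLittleO_sub_taylor {F : Type*} [NormedAddCommGroup F] [NormedSpace ℝ F]
    {g : ℝ → F} {x₀ : ℝ} {n : ℕ} (hg : ContDiffAt ℝ n g x₀) :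
    (fun x ↦ g x - ∑ k ∈ Finset.range (n + 1), ((k ! : ℝ)⁻¹ * (x - x₀) ^ k) • iteratedDeriv k g x₀)
      =o[𝓝 x₀] fun x ↦ (x - x₀) ^ n := by
  obtain ⟨u, hu, hgu⟩ := hg.contDiffOn le_rfl (by simp)
  obtain ⟨δ, hδ, hball⟩ := Metric.mem_nhds_iff.mp hu
  have hx₀ : x₀ ∈ Metric.ball x₀ δ := Metric.mem_ball_self hδ
  have h := taylor_isLittleO (convex_ball x₀ δ) hx₀ (hgu.mono hball)
  rw [Metric.isOpen_ball.nhdsWithin_eq hx₀] at h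
  simpa only [taylor_within_apply, iteratedDerivWithin_of_isOpen Metric.isOpen_ball hx₀] using h

theorem Asymptotics.IsBigO.comp_const_mul {F : Type*} [Norm F] {g : ℝ → F} {n : ℕ}
    (hg : g =O[𝓝 0] fun t ↦ t ^ n) (c : ℝ) :
    (fun t ↦ g (c * t)) =O[𝓝 0] fun t ↦ t ^ n := by
  have hc : Tendsto (c * ·) (𝓝 0) (𝓝 0) := by
    simpa using (continuous_const_mul c).tendsto 0
  refine (hg.comp_tendsto hc).trans ?_
  exact ((isBigO_refl (fun t : ℝ ↦ t ^ n) _).const_mul_left (c ^ n)).congr_left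
    fun t ↦ by simp [mul_pow]

theorem ContDiffAt.eventually_iteratedDeriv_comp_add_smul {𝕜 E F : Type*}
    [NontriviallyNormedField 𝕜] [NormedAddCommGroup E] [NormedSpace 𝕜 E]
    [NormedAddCommGroup F] [NormedSpace 𝕜 F] {f : E → F} {x y : E} {n k : ℕ}
    (hf : ContDiffAt 𝕜 n f x) (hk : k ≤ n) :
    iteratedDeriv k (fun s ↦ f (x + s • y)) =ᶠ[𝓝 (0 : 𝕜)]
      fun t ↦ iteratedFDeriv 𝕜 k f (x + t • y) fun _ ↦ y := by
  induction k with
  | zero => simp [EventuallyEq]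
  | succ k ih =>
    have hline : Tendsto (fun t : 𝕜 ↦ x + t • y) (𝓝 0) (𝓝 x) := by
      simpa using ((continuous_id.smul continuous_const).const_add x).tendsto (0 : 𝕜)
    have hf' := hline.eventually (hf.eventually (by simp))
    filter_upwards [(ih (by omega)).eventually_nhds, hf'] with t ht hft
    rw [iteratedDeriv_succ, EventuallyEq.deriv_eq ht]
    exact (hft.of_le (by exact_mod_cast hk)).deriv_fderiv_add_smul

theorem ContDiffAt.iteratedDeriv_comp_add_smul_zero {𝕜 E F : Type*}
    [NontriviallyNormedField 𝕜] [NormedAddCommGroup E] [NormedSpace 𝕜 E]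
    [NormedAddCommGroup F] [NormedSpace 𝕜 F] {f : E → F} {x y : E} {n k : ℕ}
    (hf : ContDiffAt 𝕜 n f x) (hk : k ≤ n) :
    iteratedDeriv k (fun s ↦ f (x + s • y)) (0 : 𝕜) = iteratedFDeriv 𝕜 k f x fun _ ↦ y := by
  simpa using (hf.eventually_iteratedDeriv_comp_add_smul (y := y) hk).self_of_nhds

theorem ContDiffAt.isBigO_sub_taylor {F : Type*} [NormedAddCommGroup F] [NormedSpace ℝ F]
    {g : ℝ → F} {x₀ : ℝ} {n : ℕ} (hg : ContDiffAt ℝ (n + 1) g x₀) :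
    (fun x ↦ g x - ∑ k ∈ Finset.range (n + 1), ((k ! : ℝ)⁻¹ * (x - x₀) ^ k) • iteratedDeriv k g x₀)
      =O[𝓝 x₀] fun x ↦ (x - x₀) ^ (n + 1) := by
  have hlast : (fun x ↦ (((n + 1)! : ℝ)⁻¹ * (x - x₀) ^ (n + 1)) • iteratedDeriv (n + 1) g x₀)
      =O[𝓝 x₀] fun x ↦ (x - x₀) ^ (n + 1) :=
    (((isBigO_refl _ _).const_mul_left _).smul (isBigO_const_const _ one_ne_zero _)).congr_right
      fun x ↦ by simp
  refine ((ContDiffAt.isLittleO_sub_taylor (n := n + 1) (by exact_mod_cast hg)).isBigO.add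
    hlast).congr_left fun x ↦ ?_
  rw [Finset.sum_range_succ]
  abel

section Stencil

variable {F : Type*} [NormedAddCommGroup F] [NormedSpace ℝ F]

noncomputable def secondDerivStencil (g : ℝ → F) (ε : ℝ) : F :=
  (24 : ℝ) • g (ε / 2) - (6 : ℝ) • g ε + (8 / 9 : ℝ) • g (3 * ε / 2)

theorem secondDerivStencil_isBigO_pow {g : ℝ → F} {n : ℕ}
    (hg : g =O[𝓝 0] fun t ↦ t ^ n) :
    secondDerivStencil g =O[𝓝 0] fun ε ↦ ε ^ n := by
  have h := fun c : ℝ ↦ hg.comp_const_mul c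
  refine (((h (1 / 2)).const_smul_left (24 : ℝ)).sub ((h 1).const_smul_left (6 : ℝ))).add
    ((h (3 / 2)).const_smul_left (8 / 9 : ℝ)) |>.congr_left fun ε ↦ ?_
  simp only [secondDerivStencil, Pi.smul_apply, one_mul]
  ring_nf

/-- `24 (1/2)^k - 6 + (8/9) (3/2)^k` vanishes for `k = 3, 4` and equals `2` for `k = 2`. -/
theorem secondDerivStencil_sub_taylor (u : ℝ → F) (c : ℕ → F) (ε : ℝ) :
    secondDerivStencil (fun t ↦ u t - c 0 - t • c 1) ε - ε ^ 2 • c 2 =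
      secondDerivStencil (fun t ↦ u t - ∑ k ∈ Finset.range 5, ((k ! : ℝ)⁻¹ * t ^ k) • c k) ε := by
  simp only [secondDerivStencil, Finset.sum_range_succ, Finset.sum_range_zero, Nat.factorial]
  push_cast
  module

end Stencil

theorem second_directional_derivative_stencil_order5_general
    {E F : Type*} [NormedAddCommGroup E] [NormedSpace ℝ E]
    [NormedAddCommGroup F] [NormedSpace ℝ F]
    (f : E → F) (x₀ v : E)
    (hf : ContDiffAt ℝ 5 f x₀)
    (fnl : E → F) (hfnl : ∀ a, fnl a = f (x₀ + a) - f x₀ - fderiv ℝ f x₀ a) :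
    (fun ε : ℝ =>
        (24 : ℝ) • fnl ((ε / 2) • v) - (6 : ℝ) • fnl (ε • v)
          + (8 / 9 : ℝ) • fnl ((3 * ε / 2) • v)
          - ε ^ 2 • iteratedFDeriv ℝ 2 f x₀ ![v, v])
      =O[𝓝 (0 : ℝ)] fun ε => ε ^ 5 := by
  set u : ℝ → F := fun t ↦ f (x₀ + t • v)
  have hu : ContDiffAt ℝ 5 u 0 :=
    (by simpa using hf : ContDiffAt ℝ 5 f (x₀ + (0 : ℝ) • v)).comp 0 (by fun_prop)
  have hc : ∀ k ≤ 5, iteratedDeriv k u 0 = iteratedFDeriv ℝ k f x₀ fun _ ↦ v :=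
    fun k hk ↦ hf.iteratedDeriv_comp_add_smul_zero hk
  have hfnl_line : ∀ t : ℝ, fnl (t • v) = u t - iteratedDeriv 0 u 0 - t • iteratedDeriv 1 u 0 := by
    intro t
    simp [hfnl, hc 0, hc 1, u]
  have hc2 : iteratedFDeriv ℝ 2 f x₀ ![v, v] = iteratedDeriv 2 u 0 := by
    rw [hc 2 (by norm_num)]
    congr 1
    ext i
    fin_cases i <;> rfl
  have hR := hu.isBigO_sub_taylor (n := 4)
  simp only [sub_zero] at hR
  refine (secondDerivStencil_isBigO_pow hR).congr_left fun ε ↦ ?_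
  rw [← secondDerivStencil_sub_taylor, hc2]
  simp only [secondDerivStencil, hfnl_line]

/-- Fourth-order-accurate stencil for the second directional derivative:
`24 • f_nl((ε/2)•v) - 6 • f_nl(ε•v) + (8/9) • f_nl((3ε/2)•v) = ε² • f″(x₀)[v,v] + O(ε⁵)`. -/
theorem second_directional_derivative_stencil_order5
    {E F : Type*} [NormedAddCommGroup E] [NormedSpace ℝ E] [CompleteSpace E]
    [NormedAddCommGroup F] [NormedSpace ℝ F] [CompleteSpace F]
    (f : E → F) (x₀ v : E)
    (hf : ContDiffAt ℝ 5 f x₀)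
    (fnl : E → F) (hfnl : ∀ a, fnl a = f (x₀ + a) - f x₀ - fderiv ℝ f x₀ a) :
    (fun ε : ℝ =>
        (24 : ℝ) • fnl ((ε / 2) • v) - (6 : ℝ) • fnl (ε • v)
          + (8 / 9 : ℝ) • fnl ((3 * ε / 2) • v)
          - ε ^ 2 • iteratedFDeriv ℝ 2 f x₀ ![v, v])
      =O[𝓝 (0 : ℝ)] fun ε => ε ^ 5 :=
  second_directional_derivative_stencil_order5_general f x₀ v hf fnl hfnl
end

section
/- Let f be C⁵ on a neighbourhood of x₀ and fix u, w ∈ E. Then the six-point stencil for the mixed third derivative, twice in the first-order direction ε•u and once in the second-order direction ε²•w, is fifth-order accurate: the function ε ↦ ( 4•f(x₀ + ε²•w) − 8•f(x₀ + (ε/2)•u + ε²•w) + 4•f(x₀ + ε•u + ε²•w) ) − ( 4•f(x₀) − 8•f(x₀ + (ε/2)•u) + 4•f(x₀ + ε•u) ) − ε⁴ • f⁽³⁾(x₀)[u,u,w] is O(ε⁵) as ε → 0. -/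
/-!
The stencil is `4 • Δ_{(ε/2)u} Δ_{(ε/2)u} Δ_{ε²w} f (x₀)`, a mixed third forward difference.
For any steps `v₁, …, v_k` one has `‖Δ_{v₁} ⋯ Δ_{v_k} f x - D^k f(x)[v₁, …, v_k]‖ ≤
C ∏ ‖vᵢ‖ ∑ ‖vᵢ‖` when `‖D^{k+1} f‖ ≤ C` near `x`. Induct on `k`: peeling off `Δ_{v₁}` replaces
`f` by `Δ_{v₁} f`, whose `(k+1)`-st derivative is bounded by `C ‖v₁‖` by the mean value theorem,
and a first-order Taylor estimate for `D^k f` over the step `v₁` accounts for the rest. With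
steps of sizes `ε/2, ε/2, ε²` this error is `O(ε⁴ · ε)`.
-/

open Topology Asymptotics Metric Set

def mixedFwdDiff {M G : Type*} [AddCommMonoid M] [AddCommGroup G] :
    {k : ℕ} → (Fin k → M) → (M → G) → M → G
  | 0, _, f => f
  | _ + 1, v, f => mixedFwdDiff (Fin.tail v) (fwdDiff (v 0) f)

theorem stencil_eq_mixedFwdDiff {E F : Type*} [AddCommGroup E] [Module ℝ E]
    [AddCommGroup F] [Module ℝ F] (g : E → F) (x₀ u w : E) (ε : ℝ) :
    ((4 : ℝ) • g (x₀ + ε ^ 2 • w) - (8 : ℝ) • g (x₀ + (ε / 2) • u + ε ^ 2 • w)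
        + (4 : ℝ) • g (x₀ + ε • u + ε ^ 2 • w))
      - ((4 : ℝ) • g x₀ - (8 : ℝ) • g (x₀ + (ε / 2) • u) + (4 : ℝ) • g (x₀ + ε • u))
    = (4 : ℝ) • mixedFwdDiff ![(ε / 2) • u, (ε / 2) • u, ε ^ 2 • w] g x₀ := by
  have h₁ : x₀ + ε ^ 2 • w + (ε / 2) • u = x₀ + (ε / 2) • u + ε ^ 2 • w := add_right_comm _ _ _
  have h₂ : x₀ + (ε / 2) • u + (ε / 2) • u = x₀ + ε • u := by
    rw [add_assoc, ← add_smul, add_halves]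
  have h₃ : x₀ + ε ^ 2 • w + (ε / 2) • u + (ε / 2) • u = x₀ + ε • u + ε ^ 2 • w := by
    rw [h₁, add_right_comm, h₂]
  simp only [mixedFwdDiff, fwdDiff, Fin.tail, Fin.succ_zero_eq_one, Fin.succ_one_eq_two,
    Matrix.cons_val, Matrix.cons_val_one, Matrix.cons_val_zero]
  rw [h₃, h₁, h₂]
  module

theorem ContinuousMultilinearMap.map_smul_vecCons_three {R M N : Type*} [CommSemiring R]
    [AddCommMonoid M] [Module R M] [TopologicalSpace M]
    [AddCommMonoid N] [Module R N] [TopologicalSpace N]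
    (T : ContinuousMultilinearMap R (fun _ : Fin 3 => M) N) (a b c : R) (u v w : M) :
    T ![a • u, b • v, c • w] = (a * b * c) • T ![u, v, w] := by
  have h : ![a • u, b • v, c • w] = fun i => ![a, b, c] i • ![u, v, w] i := by
    funext i; fin_cases i <;> rfl
  rw [h, T.map_smul_univ, Fin.prod_univ_three]
  rfl

theorem closedBall_subset_inter_preimage_add {E : Type*} [SeminormedAddCommGroup E]
    {s : Set E} {x a : E} {r : ℝ} (h : closedBall x (‖a‖ + r) ⊆ s) :
    closedBall x r ⊆ s ∩ (· + a) ⁻¹' s := by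
  intro y hy
  rw [mem_closedBall_iff_norm] at hy
  refine ⟨h ?_, h ?_⟩ <;> rw [mem_closedBall_iff_norm]
  · linarith [norm_nonneg a]
  · calc ‖y + a - x‖ ≤ ‖y - x‖ + ‖a‖ := by rw [add_sub_right_comm]; exact norm_add_le _ _
      _ ≤ ‖a‖ + r := by linarith

section

variable {E F : Type*} [NormedAddCommGroup E] [NormedSpace ℝ E]
  [NormedAddCommGroup F] [NormedSpace ℝ F] {f : E → F} {s : Set E} {n : ℕ} {C : ℝ}

theorem iteratedFDeriv_fwdDiff {a y : E} (hy : ContDiffAt ℝ n f y)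
    (hya : ContDiffAt ℝ n f (y + a)) :
    iteratedFDeriv ℝ n (fwdDiff a f) y = iteratedFDeriv ℝ n f (y + a) - iteratedFDeriv ℝ n f y := by
  have hshift : ContDiffAt ℝ n (fun z => f (z + a)) y :=
    hya.comp y (contDiffAt_id.add contDiffAt_const)
  rw [show fwdDiff a f = (fun z => f (z + a)) - f from rfl, iteratedFDeriv_sub_apply hshift hy,
    iteratedFDeriv_comp_add_right]

theorem ContDiffAt.fwdDiff {a y : E} (hy : ContDiffAt ℝ n f y)
    (hya : ContDiffAt ℝ n f (y + a)) : ContDiffAt ℝ n (fwdDiff a f) y :=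
  (hya.comp y (contDiffAt_id.add contDiffAt_const)).sub hy

theorem norm_iteratedFDeriv_sub_le (hs : Convex ℝ s) (hf : ∀ y ∈ s, ContDiffAt ℝ (n + 1) f y)
    (hC : ∀ y ∈ s, ‖iteratedFDeriv ℝ (n + 1) f y‖ ≤ C) {x y : E} (hx : x ∈ s) (hy : y ∈ s) :
    ‖iteratedFDeriv ℝ n f y - iteratedFDeriv ℝ n f x‖ ≤ C * ‖y - x‖ :=
  hs.norm_image_sub_le_of_norm_fderiv_le
    (fun z hz => (hf z hz).differentiableAt_iteratedFDeriv (by norm_cast; omega))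
    (fun z hz => norm_fderiv_iteratedFDeriv.trans_le (hC z hz)) hx hy

theorem norm_iteratedFDeriv_add_sub_sub_fderiv_le (hs : Convex ℝ s)
    (hf : ∀ y ∈ s, ContDiffAt ℝ (n + 2) f y) (hC : ∀ y ∈ s, ‖iteratedFDeriv ℝ (n + 2) f y‖ ≤ C)
    {x a : E} (hx : x ∈ s) (hxa : x + a ∈ s) :
    ‖iteratedFDeriv ℝ n f (x + a) - iteratedFDeriv ℝ n f x
      - fderiv ℝ (iteratedFDeriv ℝ n f) x a‖ ≤ C * ‖a‖ ^ 2 := by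
  have hlip : ∀ z ∈ s ∩ closedBall x ‖a‖,
      ‖fderiv ℝ (iteratedFDeriv ℝ n f) z - fderiv ℝ (iteratedFDeriv ℝ n f) x‖ ≤ C * ‖a‖ := by
    intro z hz
    rw [fderiv_iteratedFDeriv, Function.comp_apply, Function.comp_apply,
      ← LinearIsometryEquiv.map_sub, LinearIsometryEquiv.norm_map]
    calc _ ≤ C * ‖z - x‖ := norm_iteratedFDeriv_sub_le hs hf hC hx hz.1
      _ ≤ C * ‖a‖ := by
        gcongr
        · exact (norm_nonneg _).trans (hC x hx)
        · exact mem_closedBall_iff_norm.1 hz.2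
  have hmvt := (hs.inter (convex_closedBall x ‖a‖)).norm_image_sub_le_of_norm_fderiv_le'
    (fun z hz => (hf z hz.1).differentiableAt_iteratedFDeriv (by norm_cast; omega)) hlip
    ⟨hx, mem_closedBall_self (norm_nonneg a)⟩ ⟨hxa, by simp⟩
  simpa [pow_two, mul_assoc] using hmvt

theorem norm_mixedFwdDiff_sub_iteratedFDeriv_le {k : ℕ} (v : Fin k → E) (hs : Convex ℝ s)
    (hf : ∀ y ∈ s, ContDiffAt ℝ (k + 1) f y) (hC : ∀ y ∈ s, ‖iteratedFDeriv ℝ (k + 1) f y‖ ≤ C)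
    {x : E} (hx : closedBall x (∑ i, ‖v i‖) ⊆ s) :
    ‖mixedFwdDiff v f x - iteratedFDeriv ℝ k f x v‖ ≤ C * (∏ i, ‖v i‖) * ∑ i, ‖v i‖ := by
  induction k generalizing f s C with
  | zero => simp [mixedFwdDiff]
  | succ k ih =>
    set a := v 0
    have hnorm : ∑ i, ‖v i‖ = ‖a‖ + ∑ i, ‖Fin.tail v i‖ := Fin.sum_univ_succ _
    have hf' : ∀ y ∈ s, ContDiffAt ℝ (k + 1) f y := fun y hy =>
      (hf y hy).of_le (by exact_mod_cast (by omega : k + 1 ≤ k + 1 + 1))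
    rw [hnorm] at hx
    have hxs : x ∈ s := hx (mem_closedBall_self (by positivity))
    have hxa : x + a ∈ s := hx <| by
      simp only [mem_closedBall, dist_self_add_left, le_add_iff_nonneg_right]
      positivity
    have hsa := closedBall_subset_inter_preimage_add hx
    have hg : ∀ y ∈ s ∩ (· + a) ⁻¹' s, ContDiffAt ℝ (k + 1) (fwdDiff a f) y := fun y hy =>
      (hf' y hy.1).fwdDiff (hf' _ hy.2)
    have hgC : ∀ y ∈ s ∩ (· + a) ⁻¹' s,
        ‖iteratedFDeriv ℝ (k + 1) (fwdDiff a f) y‖ ≤ C * ‖a‖ := fun y hy => by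
      rw [iteratedFDeriv_fwdDiff (hf' y hy.1) (hf' _ hy.2)]
      simpa using norm_iteratedFDeriv_sub_le hs hf hC hy.1 hy.2
    have hdiff := ih (Fin.tail v) (hs.inter (hs.translate_preimage_left a)) hg hgC hsa
    rw [iteratedFDeriv_fwdDiff ((hf' x hxs).of_le (by norm_cast; omega))
      ((hf' _ hxa).of_le (by norm_cast; omega))] at hdiff
    have htaylor := norm_iteratedFDeriv_add_sub_sub_fderiv_le hs hf hC hxs hxa
    calc ‖mixedFwdDiff v f x - iteratedFDeriv ℝ (k + 1) f x v‖
        = ‖(mixedFwdDiff (Fin.tail v) (fwdDiff a f) x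
              - (iteratedFDeriv ℝ k f (x + a) - iteratedFDeriv ℝ k f x) (Fin.tail v))
            + (iteratedFDeriv ℝ k f (x + a) - iteratedFDeriv ℝ k f x
              - fderiv ℝ (iteratedFDeriv ℝ k f) x a) (Fin.tail v)‖ := by
          rw [iteratedFDeriv_succ_apply_left, mixedFwdDiff]
          congr 1
          simp only [sub_apply]
          abel
      _ ≤ C * ‖a‖ * (∏ i, ‖Fin.tail v i‖) * ∑ i, ‖Fin.tail v i‖
            + C * ‖a‖ ^ 2 * ∏ i, ‖Fin.tail v i‖ :=
          norm_add_le_of_le hdiff ((ContinuousMultilinearMap.le_opNorm _ _).trans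
            (by gcongr))
      _ = C * (∏ i, ‖v i‖) * ∑ i, ‖v i‖ := by
          rw [hnorm, Fin.prod_univ_succ]
          simp only [Fin.tail]
          ring

theorem ContDiffAt.exists_ball_norm_iteratedFDeriv_le {x : E} (hf : ContDiffAt ℝ n f x) :
    ∃ δ > 0, ∃ C, ∀ y ∈ ball x δ, ContDiffAt ℝ n f y ∧ ‖iteratedFDeriv ℝ n f y‖ ≤ C := by
  have hbound : ∀ᶠ y in 𝓝 x, ‖iteratedFDeriv ℝ n f y‖ < ‖iteratedFDeriv ℝ n f x‖ + 1 :=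
    (hf.continuousAt_iteratedFDeriv le_rfl).norm.eventually_lt_const (lt_add_one _)
  obtain ⟨δ, hδ, hball⟩ :=
    Metric.eventually_nhds_iff_ball.1 ((hf.eventually (by simp)).and hbound)
  exact ⟨δ, hδ, _, fun y hy => ⟨(hball y hy).1, (hball y hy).2.le⟩⟩

theorem norm_stencil_sub_le (hs : Convex ℝ s) (hf : ∀ y ∈ s, ContDiffAt ℝ 4 f y)
    (hC : ∀ y ∈ s, ‖iteratedFDeriv ℝ 4 f y‖ ≤ C) (x₀ u w : E) {ε : ℝ}
    (hε : closedBall x₀ (|ε| * ‖u‖ + ε ^ 2 * ‖w‖) ⊆ s) :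
    ‖((4 : ℝ) • f (x₀ + ε ^ 2 • w) - (8 : ℝ) • f (x₀ + (ε / 2) • u + ε ^ 2 • w)
            + (4 : ℝ) • f (x₀ + ε • u + ε ^ 2 • w))
          - ((4 : ℝ) • f x₀ - (8 : ℝ) • f (x₀ + (ε / 2) • u) + (4 : ℝ) • f (x₀ + ε • u))
          - ε ^ 4 • iteratedFDeriv ℝ 3 f x₀ ![u, u, w]‖
      ≤ C * (‖u‖ ^ 2 * ‖w‖) * ε ^ 4 * (|ε| * ‖u‖ + ε ^ 2 * ‖w‖) := by
  set v := ![(ε / 2) • u, (ε / 2) • u, ε ^ 2 • w]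
  have hsum : ∑ i, ‖v i‖ = |ε| * ‖u‖ + ε ^ 2 * ‖w‖ := by
    simp only [v, Fin.sum_univ_three, Matrix.cons_val_zero, Matrix.cons_val_one, Matrix.cons_val,
      norm_smul, norm_div, norm_pow, Real.norm_eq_abs, sq_abs]
    ring
  have hprod : ∏ i, ‖v i‖ = ε ^ 4 / 4 * (‖u‖ ^ 2 * ‖w‖) := by
    simp only [v, Fin.prod_univ_three, Matrix.cons_val_zero, Matrix.cons_val_one, Matrix.cons_val,
      norm_smul, norm_div, norm_pow, Real.norm_eq_abs, sq_abs]
    rw [show ε ^ 4 = |ε| ^ 2 * ε ^ 2 by rw [sq_abs]; ring]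
    ring
  have hmain := norm_mixedFwdDiff_sub_iteratedFDeriv_le v hs hf hC (hsum ▸ hε)
  rw [hsum, hprod, ContinuousMultilinearMap.map_smul_vecCons_three] at hmain
  have hscale : (4 : ℝ) • mixedFwdDiff v f x₀ - ε ^ 4 • iteratedFDeriv ℝ 3 f x₀ ![u, u, w]
      = (4 : ℝ) • (mixedFwdDiff v f x₀
        - (ε / 2 * (ε / 2) * ε ^ 2) • iteratedFDeriv ℝ 3 f x₀ ![u, u, w]) := by
    rw [smul_sub, smul_smul]
    ring_nf
  rw [stencil_eq_mixedFwdDiff, hscale, norm_smul, Real.norm_of_nonneg (by norm_num)]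
  linarith

end

theorem mixed_third_derivative_stencil_order5_general
    {E F : Type*} [NormedAddCommGroup E] [NormedSpace ℝ E]
    [NormedAddCommGroup F] [NormedSpace ℝ F]
    (f : E → F) (x₀ u w : E)
    (hf : ContDiffAt ℝ 5 f x₀) :
    (fun ε : ℝ =>
        ((4 : ℝ) • f (x₀ + ε ^ 2 • w) - (8 : ℝ) • f (x₀ + (ε / 2) • u + ε ^ 2 • w)
            + (4 : ℝ) • f (x₀ + ε • u + ε ^ 2 • w))
          - ((4 : ℝ) • f x₀ - (8 : ℝ) • f (x₀ + (ε / 2) • u) + (4 : ℝ) • f (x₀ + ε • u))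
          - ε ^ 4 • iteratedFDeriv ℝ 3 f x₀ ![u, u, w])
      =O[𝓝 (0 : ℝ)] fun ε => ε ^ 5 := by
  obtain ⟨δ, hδ, C, hball⟩ :=
    (hf.of_le (by norm_num) : ContDiffAt ℝ (4 : ℕ) f x₀).exists_ball_norm_iteratedFDeriv_le
  have hC : 0 ≤ C := (norm_nonneg _).trans (hball x₀ (mem_ball_self hδ)).2
  have hsmall : ∀ᶠ ε : ℝ in 𝓝 0, |ε| ≤ 1 ∧ |ε| * ‖u‖ + ε ^ 2 * ‖w‖ < δ := by
    have hcont : Continuous fun ε : ℝ => |ε| * ‖u‖ + ε ^ 2 * ‖w‖ := by fun_prop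
    filter_upwards [closedBall_mem_nhds (0 : ℝ) one_pos,
      (hcont.tendsto' 0 0 (by simp)).eventually (gt_mem_nhds hδ)] with ε hε₁ hεδ
    exact ⟨by simpa using hε₁, hεδ⟩
  refine isBigO_iff.2 ⟨C * (‖u‖ ^ 2 * ‖w‖) * (‖u‖ + ‖w‖), ?_⟩
  filter_upwards [hsmall] with ε ⟨hε₁, hεδ⟩
  refine (norm_stencil_sub_le (convex_ball x₀ δ) (fun y hy => (hball y hy).1)
    (fun y hy => (hball y hy).2) x₀ u w (closedBall_subset_ball hεδ)).trans ?_
  have hsq : ε ^ 2 ≤ |ε| := by rw [← sq_abs]; nlinarith [abs_nonneg ε]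
  calc C * (‖u‖ ^ 2 * ‖w‖) * ε ^ 4 * (|ε| * ‖u‖ + ε ^ 2 * ‖w‖)
      ≤ C * (‖u‖ ^ 2 * ‖w‖) * ε ^ 4 * (|ε| * ‖u‖ + |ε| * ‖w‖) := by gcongr
    _ = C * (‖u‖ ^ 2 * ‖w‖) * (‖u‖ + ‖w‖) * ‖ε ^ 5‖ := by
      rw [norm_pow, Real.norm_eq_abs, ← (by decide : Even 4).pow_abs ε]
      ring

/-- Six-point stencil for the mixed third derivative, twice in the
first-order direction `ε•u` and once in the second-order direction `ε²•w`:
`(4f(x₀+ε²w) - 8f(x₀+(ε/2)u+ε²w) + 4f(x₀+εu+ε²w))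
  - (4f(x₀) - 8f(x₀+(ε/2)u) + 4f(x₀+εu)) = ε⁴ • f⁽³⁾(x₀)[u,u,w] + O(ε⁵)`. -/
theorem mixed_third_derivative_stencil_order5
    {E F : Type*} [NormedAddCommGroup E] [NormedSpace ℝ E] [CompleteSpace E]
    [NormedAddCommGroup F] [NormedSpace ℝ F] [CompleteSpace F]
    (f : E → F) (x₀ u w : E)
    (hf : ContDiffAt ℝ 5 f x₀) :
    (fun ε : ℝ =>
        ((4 : ℝ) • f (x₀ + ε ^ 2 • w) - (8 : ℝ) • f (x₀ + (ε / 2) • u + ε ^ 2 • w)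
            + (4 : ℝ) • f (x₀ + ε • u + ε ^ 2 • w))
          - ((4 : ℝ) • f x₀ - (8 : ℝ) • f (x₀ + (ε / 2) • u) + (4 : ℝ) • f (x₀ + ε • u))
          - ε ^ 4 • iteratedFDeriv ℝ 3 f x₀ ![u, u, w])
      =O[𝓝 (0 : ℝ)] fun ε => ε ^ 5 :=
  mixed_third_derivative_stencil_order5_general f x₀ u w hf
end

section
/- Let f be C⁴ on a neighbourhood of x₀ and fix u, w ∈ E. Then the six-point one-sided stencil for the mixed second derivative in the first-order direction ε•u and the second-order direction ε²•w is fifth-order accurate: the function ε ↦ ( −3•f(x₀ + ε²•w) + 4•f(x₀ + (ε/2)•u + ε²•w) − f(x₀ + ε•u + ε²•w) ) − ( −3•f(x₀) + 4•f(x₀ + (ε/2)•u) − f(x₀ + ε•u) ) − ε³ • f″(x₀)[u,w] is O(ε⁵) as ε → 0. -/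
/-!
Each difference `f (y + ε² • w) - f y` of the stencil is expanded to second order around `y`,
with a remainder `O(ε⁶)` that is uniform for `y` near `x₀`. What is left are the one-sided
stencils of `y ↦ f' y w` and `y ↦ f'' y w w`, weighted by `ε²` and `ε⁴ / 2`. The weights
`-3, 4, -1` at the nodes `0, ε / 2, ε` annihilate constants and quadratics and reproduce linear
functions, so the first stencil is `ε • f'' x₀ u w + O(ε³)` and the second is `O(ε)`.
-/

open Topology Asymptotics

open Filter Set

section

variable {E G : Type*} [NormedAddCommGroup E] [NormedSpace ℝ E]
  [NormedAddCommGroup G] [NormedSpace ℝ G]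

theorem norm_sub_taylor_two_unitInterval_le {f₀ f₁ f₂ : ℝ → G} {M : ℝ}
    (h₀ : ∀ t ∈ Icc (0 : ℝ) 1, HasDerivWithinAt f₀ (f₁ t) (Icc 0 1) t)
    (h₁ : ∀ t ∈ Icc (0 : ℝ) 1, HasDerivWithinAt f₁ (f₂ t) (Icc 0 1) t)
    (h₂ : ∀ t ∈ Icc (0 : ℝ) 1, ‖f₂ t - f₂ 0‖ ≤ M * t) :
    ‖f₀ 1 - f₀ 0 - f₁ 0 - (2⁻¹ : ℝ) • f₂ 0‖ ≤ M := by
  have hM : 0 ≤ M := by simpa using (norm_nonneg _).trans (h₂ 1 (by simp))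
  have weaken : ∀ t ∈ Ico (0 : ℝ) 1, M * t ≤ M := fun t ht => mul_le_of_le_one_right hM ht.2.le
  have hid : ∀ t, HasDerivWithinAt (fun s : ℝ => s) 1 (Icc 0 1) t :=
    fun t => hasDerivWithinAt_id t _
  have bound₁ : ∀ t ∈ Icc (0 : ℝ) 1, ‖f₁ t - t • f₂ 0 - f₁ 0‖ ≤ M * t := by
    have := norm_image_sub_le_of_norm_deriv_le_segment' (f := fun t => f₁ t - t • f₂ 0)
      (fun t ht => ?_) fun t ht => (h₂ t (Ico_subset_Icc_self ht)).trans (weaken t ht)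
    · simpa using this
    · simpa only [one_smul] using (h₁ t ht).fun_sub ((hid t).smul_const (f₂ 0))
  have hsq : ∀ t, HasDerivWithinAt (fun s : ℝ => s ^ 2 / 2) t (Icc 0 1) t := fun t => by
    simpa using ((hid t).pow 2).div_const 2
  have bound₀ := norm_image_sub_le_of_norm_deriv_le_segment'
    (f := fun t => f₀ t - t • f₁ 0 - (t ^ 2 / 2) • f₂ 0) (C := M)
    (fun t ht => ((h₀ t ht).fun_sub ((hid t).smul_const (f₁ 0))).fun_sub ((hsq t).smul_const _))
    (fun t ht => ?_) 1 (by simp)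
  · convert bound₀ using 2 <;> norm_num
    module
  · simpa only [one_smul, sub_right_comm _ (f₁ 0)]
      using (bound₁ t (Ico_subset_Icc_self ht)).trans (weaken t ht)

theorem Convex.norm_sub_taylor_two_le_of_lipschitzOnWith {f : E → G} {f' : E → E →L[ℝ] G}
    {f'' : E → E →L[ℝ] E →L[ℝ] G} {s : Set E} {K : NNReal} (hs : Convex ℝ s)
    (hf : ∀ z ∈ s, HasFDerivWithinAt f (f' z) s z)
    (hf' : ∀ z ∈ s, HasFDerivWithinAt f' (f'' z) s z) (hf'' : LipschitzOnWith K f'' s)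
    {x y : E} (hx : x ∈ s) (hy : y ∈ s) :
    ‖f y - f x - f' x (y - x) - (2⁻¹ : ℝ) • f'' x (y - x) (y - x)‖ ≤ K * ‖y - x‖ ^ 3 := by
  set v := y - x
  set c : ℝ → E := fun t => x + t • v
  have hc : MapsTo c (Icc 0 1) s := fun t ht => hs.add_smul_sub_mem hx hy ht
  have hid : ∀ t, HasDerivWithinAt (fun s : ℝ => s) 1 (Icc 0 1) t :=
    fun t => hasDerivWithinAt_id t _
  have hc' : ∀ t, HasDerivWithinAt c v (Icc 0 1) t := fun t => by
    simpa only [one_smul] using ((hid t).smul_const v).const_add x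
  have h₀ : ∀ t ∈ Icc (0 : ℝ) 1, HasDerivWithinAt (f ∘ c) (f' (c t) v) (Icc 0 1) t :=
    fun t ht => (hf _ (hc ht)).comp_hasDerivWithinAt t (hc' t) hc
  have h₁ : ∀ t ∈ Icc (0 : ℝ) 1,
      HasDerivWithinAt (fun t => f' (c t) v) (f'' (c t) v v) (Icc 0 1) t := fun t ht => by
    simpa using ((hf' _ (hc ht)).comp_hasDerivWithinAt t (hc' t) hc).clm_apply
      (hasDerivWithinAt_const t _ v)
  have h₂ : ∀ t ∈ Icc (0 : ℝ) 1, ‖f'' (c t) v v - f'' (c 0) v v‖ ≤ (K * ‖v‖ ^ 3) * t :=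
    fun t ht => calc
      ‖f'' (c t) v v - f'' (c 0) v v‖ ≤ ‖f'' (c t) - f'' (c 0)‖ * ‖v‖ * ‖v‖ := by
        rw [← sub_apply, ← sub_apply]
        exact (ContinuousLinearMap.le_opNorm₂ _ _ _)
      _ ≤ K * ‖c t - c 0‖ * ‖v‖ * ‖v‖ := by
        grw [← dist_eq_norm (f'' _), hf''.dist_le_mul _ (hc ht) _ (hc (by simp)), dist_eq_norm]
      _ = (K * ‖v‖ ^ 3) * t := by
        simp [c, norm_smul, abs_of_nonneg ht.1]; ring
  simpa [c, v] using norm_sub_taylor_two_unitInterval_le h₀ h₁ h₂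

theorem ContDiffAt.isBigO_sub_taylor_two {f : E → G} {x : E} (hf : ContDiffAt ℝ 3 f x)
    {α : Type*} {l : Filter α} {p q : α → E} (hp : Tendsto p l (𝓝 x)) (hq : Tendsto q l (𝓝 x)) :
    (fun a => f (q a) - f (p a) - fderiv ℝ f (p a) (q a - p a)
        - (2⁻¹ : ℝ) • fderiv ℝ (fderiv ℝ f) (p a) (q a - p a) (q a - p a))
      =O[l] fun a => ‖q a - p a‖ ^ 3 := by
  obtain ⟨K, t, ht, hK⟩ := ((hf.fderiv_right (m := 2) (by norm_num)).fderiv_right (m := 1)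
    (by norm_num)).exists_lipschitzOnWith
  obtain ⟨r, hr, hball⟩ := Metric.mem_nhds_iff.1 (inter_mem ht (hf.eventually (by simp)))
  have hderiv : ∀ z ∈ Metric.ball x r, HasFDerivAt f (fderiv ℝ f z) z ∧
      HasFDerivAt (fderiv ℝ f) (fderiv ℝ (fderiv ℝ f) z) z := fun z hz =>
    have hfz : ContDiffAt ℝ 3 f z := (hball hz).2
    ⟨(hfz.differentiableAt (by norm_num)).hasFDerivAt,
      ((hfz.fderiv_right (m := 2) (by norm_num)).differentiableAt (by norm_num)).hasFDerivAt⟩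
  refine isBigO_iff.2 ⟨K, ?_⟩
  filter_upwards [hp (Metric.ball_mem_nhds x hr), hq (Metric.ball_mem_nhds x hr)] with a hpa hqa
  rw [norm_pow, norm_norm]
  exact (convex_ball x r).norm_sub_taylor_two_le_of_lipschitzOnWith
    (fun z hz => (hderiv z hz).1.hasFDerivWithinAt) (fun z hz => (hderiv z hz).2.hasFDerivWithinAt)
    (hK.mono fun z hz => (hball hz).1) hpa hqa

theorem isBigO_smul_const {α : Type*} {l : Filter α} (k : α → ℝ) (v : E) :
    (fun a => k a • v) =O[l] k :=
  isBigO_of_le' (c := ‖v‖) l fun a => by rw [norm_smul, mul_comm]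

theorem isBigO_mul_smul {l : Filter ℝ} (c : ℝ) (v : E) : (fun ε : ℝ => (c * ε) • v) =O[l] id :=
  (isBigO_smul_const _ v).trans (isBigO_const_mul_self c id l)

variable {x₀ u : E}

noncomputable def oneSidedStencil (φ : E → G) (x₀ u : E) (ε : ℝ) : G :=
  -(3 : ℝ) • φ x₀ + (4 : ℝ) • φ (x₀ + (ε / 2) • u) - φ (x₀ + ε • u)

theorem isBigO_oneSidedStencil {φ : ℝ → E → G} {g : ℝ → ℝ} {l : Filter ℝ}
    (h : ∀ c : ℝ, (fun ε => φ ε (x₀ + (c * ε) • u)) =O[l] g) :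
    (fun ε => oneSidedStencil (φ ε) x₀ u ε) =O[l] g := by
  have h₀ : (fun ε => φ ε x₀) =O[l] g := by simpa using h 0
  have h₁ : (fun ε => φ ε (x₀ + (ε / 2) • u)) =O[l] g := by simpa [div_eq_inv_mul] using h 2⁻¹
  have h₂ : (fun ε => φ ε (x₀ + ε • u)) =O[l] g := by simpa using h 1
  exact ((h₀.const_smul_left _).add (h₁.const_smul_left _)).sub h₂

theorem tendsto_add_mul_smul (c : ℝ) : Tendsto (fun ε : ℝ => x₀ + (c * ε) • u) (𝓝 0) (𝓝 x₀) :=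
  Continuous.tendsto' (by fun_prop) 0 x₀ (by simp)

theorem DifferentiableAt.isBigO_oneSidedStencil {φ : E → G} (hφ : DifferentiableAt ℝ φ x₀) :
    (fun ε => oneSidedStencil φ x₀ u ε) =O[𝓝 0] id := by
  refine (_root_.isBigO_oneSidedStencil (x₀ := x₀) (u := u) (φ := fun _ y => φ y - φ x₀)
    fun c => ?_).congr_left fun ε => ?_
  · exact (hφ.isBigO_sub.comp_tendsto (tendsto_add_mul_smul c)).trans
      (by simpa [Function.comp_def] using isBigO_mul_smul c u)
  · simp only [oneSidedStencil]
    module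

theorem ContDiffAt.isBigO_oneSidedStencil_sub_fderiv {φ : E → G} (hφ : ContDiffAt ℝ 3 φ x₀) :
    (fun ε => oneSidedStencil φ x₀ u ε - ε • fderiv ℝ φ x₀ u) =O[𝓝 0] fun ε => ε ^ 3 := by
  refine (isBigO_oneSidedStencil (x₀ := x₀) (u := u) (φ := fun _ y => φ y - φ x₀
    - fderiv ℝ φ x₀ (y - x₀) - (2⁻¹ : ℝ) • fderiv ℝ (fderiv ℝ φ) x₀ (y - x₀) (y - x₀))
    fun c => ?_).congr_left fun ε => ?_
  · exact (hφ.isBigO_sub_taylor_two tendsto_const_nhds (tendsto_add_mul_smul c)).trans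
      (by simpa using (isBigO_mul_smul c u).norm_left.pow 3)
  · simp only [oneSidedStencil, add_sub_cancel_left, sub_self, map_smul, map_zero, smul_apply]
    module

theorem ContDiffAt.isBigO_oneSidedStencil_taylor_remainder {f : E → G}
    (hf : ContDiffAt ℝ 3 f x₀) (w : E) :
    (fun ε : ℝ => oneSidedStencil (fun y => f (y + ε ^ 2 • w) - f y - fderiv ℝ f y (ε ^ 2 • w)
      - (2⁻¹ : ℝ) • fderiv ℝ (fderiv ℝ f) y (ε ^ 2 • w) (ε ^ 2 • w)) x₀ u ε)
      =O[𝓝 0] fun ε => ε ^ 6 := by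
  refine isBigO_oneSidedStencil fun c => ?_
  have := hf.isBigO_sub_taylor_two (tendsto_add_mul_smul (u := u) c)
    (q := fun ε => x₀ + (c * ε) • u + ε ^ 2 • w) (Continuous.tendsto' (by fun_prop) _ _ (by simp))
  simp only [add_sub_cancel_left] at this
  simpa [← pow_mul] using this.trans ((isBigO_smul_const _ w).norm_left.pow 3)

end

theorem mixed_second_derivative_onesided_stencil_order5_general
    {E F : Type*} [NormedAddCommGroup E] [NormedSpace ℝ E]
    [NormedAddCommGroup F] [NormedSpace ℝ F]
    (f : E → F) (x₀ u w : E)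
    (hf : ContDiffAt ℝ 4 f x₀) :
    (fun ε : ℝ =>
        (-(3 : ℝ) • f (x₀ + ε ^ 2 • w) + (4 : ℝ) • f (x₀ + (ε / 2) • u + ε ^ 2 • w)
            - f (x₀ + ε • u + ε ^ 2 • w))
          - (-(3 : ℝ) • f x₀ + (4 : ℝ) • f (x₀ + (ε / 2) • u) - f (x₀ + ε • u))
          - ε ^ 3 • iteratedFDeriv ℝ 2 f x₀ ![u, w])
      =O[𝓝 (0 : ℝ)] fun ε => ε ^ 5 := by
  set D₁ := fderiv ℝ f
  set D₂ := fderiv ℝ D₁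
  have hD₁ : ContDiffAt ℝ 3 D₁ x₀ := hf.fderiv_right (by norm_num)
  have hD₂ : DifferentiableAt ℝ D₂ x₀ :=
    (hD₁.fderiv_right (m := 2) (by norm_num)).differentiableAt (by norm_num)
  have hR := ((hf.of_le (by norm_num)).isBigO_oneSidedStencil_taylor_remainder (u := u) w).trans
    (isLittleO_pow_pow (𝕜 := ℝ) (by norm_num : 5 < 6)).isBigO
  have hT : (fun ε : ℝ => ε ^ 2 • (oneSidedStencil D₁ x₀ u ε - ε • D₂ x₀ u) w)
      =O[𝓝 0] fun ε => ε ^ 5 :=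
    ((isBigO_refl _ _).smul (((ContinuousLinearMap.apply ℝ F w).isBigO_comp _ _).trans
      hD₁.isBigO_oneSidedStencil_sub_fderiv)).congr_right fun ε => by rw [smul_eq_mul, ← pow_add]
  have hD : (fun ε : ℝ => (2⁻¹ * ε ^ 4) • oneSidedStencil D₂ x₀ u ε w w)
      =O[𝓝 0] fun ε => ε ^ 5 :=
    ((isBigO_const_mul_self _ _ _).smul (((ContinuousLinearMap.apply ℝ F w).isBigO_comp _ _).trans
      (((ContinuousLinearMap.apply ℝ (E →L[ℝ] F) w).isBigO_comp _ _).trans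
        -- `G` is given because unification does not find the normed space structure on it
        (DifferentiableAt.isBigO_oneSidedStencil (G := E →L[ℝ] E →L[ℝ] F) hD₂)))).congr_right
      fun ε => by rw [smul_eq_mul, id, ← pow_succ]
  refine ((hR.add hT).add hD).congr_left fun ε => ?_
  simp only [oneSidedStencil, iteratedFDeriv_two_apply, Matrix.cons_val_zero, Matrix.cons_val_one,
    map_smul, sub_apply, add_apply, smul_apply]
  module

/-- Six-point one-sided stencil for the mixed second derivative in the
first-order direction `ε•u` and the second-order direction `ε²•w`:
`(-3f(x₀+ε²w) + 4f(x₀+(ε/2)u+ε²w) - f(x₀+εu+ε²w))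
  - (-3f(x₀) + 4f(x₀+(ε/2)u) - f(x₀+εu)) = ε³ • f″(x₀)[u,w] + O(ε⁵)`. -/
theorem mixed_second_derivative_onesided_stencil_order5
    {E F : Type*} [NormedAddCommGroup E] [NormedSpace ℝ E] [CompleteSpace E]
    [NormedAddCommGroup F] [NormedSpace ℝ F] [CompleteSpace F]
    (f : E → F) (x₀ u w : E)
    (hf : ContDiffAt ℝ 4 f x₀) :
    (fun ε : ℝ =>
        (-(3 : ℝ) • f (x₀ + ε ^ 2 • w) + (4 : ℝ) • f (x₀ + (ε / 2) • u + ε ^ 2 • w)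
            - f (x₀ + ε • u + ε ^ 2 • w))
          - (-(3 : ℝ) • f x₀ + (4 : ℝ) • f (x₀ + (ε / 2) • u) - f (x₀ + ε • u))
          - ε ^ 3 • iteratedFDeriv ℝ 2 f x₀ ![u, w])
      =O[𝓝 (0 : ℝ)] fun ε => ε ^ 5 :=
  mixed_second_derivative_onesided_stencil_order5_general f x₀ u w hf
end
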